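/- arXiv:2412.04953 — 7 statements merged into one kernel-verified Lean document; each statement's English description precedes it below -/
import Mathlib

section
/- Let f : X → X be a measurable map on a measurable space, μ a probability measure on X (not necessarily invariant), and 𝒫 a finite measurable partition of X. For n ≥ 1 write 𝒫^n = ⋁_{j=0}^{n-1} f^{-j}𝒫. Then for every n > 0 and every 0 < m < n, (1/n) H_μ(𝒫^n) ≤ (1/m) H_{μ_n}(𝒫^m) + (2m/n) log(#𝒫), where μ_n = (1/n) Σ_{k=0}^{n-1} μ ∘ f^{-k} and #𝒫 is the cardinality of 𝒫. -/
open MeasureTheory Filter Real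
open scoped ENNReal

/-!
For every residue `r < m`, cut `[0, n)` into an initial segment of length `r`, the blocks
`[r + j m, r + (j + 1) m)` and a tail of length `< m`. Since the join of two partitions has
at most the sum of their entropies, `H_ν(𝒫^(s+t)) ≤ H_ν(𝒫^s) + H_{ν ∘ f^{-s}}(𝒫^t)`, so
`H_μ(𝒫^n)` is at most the sum of the block entropies `H_{μ ∘ f^{-k}}(𝒫^m)` plus
`2 m log #𝒫`.
Summing over `r`, each `k < n` starts at most one block, and concavity of `x ↦ -x log x`
bounds `∑_{k<n} H_{μ ∘ f^{-k}}(𝒫^m)` by `n H_{μ_n}(𝒫^m)`.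
-/

namespace Real

lemma negMulLog_le_neg_mul_log_add_sub {p y : ℝ} (hp : 0 ≤ p) (hy : 0 < y) :
    negMulLog p ≤ -p * log y + (y - p) := by
  rcases hp.eq_or_lt with rfl | hp
  · simpa using hy.le
  have key := mul_le_mul_of_nonneg_left (log_le_sub_one_of_pos (div_pos hy hp)) hp.le
  rw [log_div hy.ne' hp.ne', mul_sub_one, mul_div_cancel₀ _ hp.ne'] at key
  rw [negMulLog]
  linarith

lemma sum_negMulLog_le_log_card {α : Type*} [Fintype α] {p : α → ℝ} (hp : ∀ a, 0 ≤ p a)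
    (hp1 : ∑ a, p a = 1) : ∑ a, negMulLog (p a) ≤ log (Fintype.card α) := by
  have hcard : (0 : ℝ) < Fintype.card α := by
    have : Nonempty α := by
      by_contra h
      simp [not_nonempty_iff.mp h] at hp1
    exact_mod_cast Fintype.card_pos
  calc ∑ a, negMulLog (p a)
      ≤ ∑ a, (-p a * log (Fintype.card α)⁻¹ + ((Fintype.card α : ℝ)⁻¹ - p a)) :=
        Finset.sum_le_sum fun a _ => negMulLog_le_neg_mul_log_add_sub (hp a) (inv_pos.mpr hcard)
    _ = log (Fintype.card α) := by
        simp only [Finset.sum_add_distrib, Finset.sum_sub_distrib, ← Finset.sum_mul,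
          Finset.sum_neg_distrib, hp1, Finset.sum_const, Finset.card_univ, nsmul_eq_mul,
          log_inv]
        field_simp
        ring

/-- Subadditivity of Shannon entropy, by Gibbs' inequality against the product of the
marginals. -/
lemma sum_sum_negMulLog_le {α β : Type*} [Fintype α] [Fintype β] {p : α → β → ℝ}
    (hp : ∀ a b, 0 ≤ p a b) (hp1 : ∑ a, ∑ b, p a b = 1) :
    ∑ a, ∑ b, negMulLog (p a b) ≤
      ∑ a, negMulLog (∑ b, p a b) + ∑ b, negMulLog (∑ a, p a b) := by
  set q := fun a => ∑ b, p a b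
  set r := fun b => ∑ a, p a b
  have hpq : ∀ a b, p a b ≤ q a := fun a b =>
    Finset.single_le_sum (fun b _ => hp a b) (Finset.mem_univ b)
  have hpr : ∀ a b, p a b ≤ r b := fun a b =>
    Finset.single_le_sum (fun a _ => hp a b) (Finset.mem_univ a)
  have hr1 : ∑ b, r b = 1 := by rw [← hp1]; exact Finset.sum_comm
  have hterm : ∀ a b, negMulLog (p a b) ≤
      -p a b * log (q a) + -p a b * log (r b) + (q a * r b - p a b) := by
    intro a b
    rcases (hp a b).eq_or_lt with h0 | hpos
    · rw [← h0]
      simpa using mul_nonneg ((hp a b).trans (hpq a b)) ((hp a b).trans (hpr a b))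
    have hq := hpos.trans_le (hpq a b)
    have hr := hpos.trans_le (hpr a b)
    have := negMulLog_le_neg_mul_log_add_sub (hp a b) (mul_pos hq hr)
    rw [log_mul hq.ne' hr.ne'] at this
    linarith
  calc ∑ a, ∑ b, negMulLog (p a b)
      ≤ ∑ a, ∑ b, (-p a b * log (q a) + -p a b * log (r b) + (q a * r b - p a b)) :=
        Finset.sum_le_sum fun a _ => Finset.sum_le_sum fun b _ => hterm a b
    _ = ∑ a, negMulLog (q a) + ∑ b, negMulLog (r b) +
          ((∑ a, q a) * ∑ b, r b - ∑ a, q a) := by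
        simp only [Finset.sum_add_distrib, Finset.sum_sub_distrib, ← Finset.sum_mul, ←
          Finset.mul_sum, negMulLog, neg_mul]
        rw [Finset.sum_comm (f := fun a b => -(p a b * log (r b)))]
        simp only [Finset.sum_neg_distrib, ← Finset.sum_mul]
        rfl
    _ = ∑ a, negMulLog (q a) + ∑ b, negMulLog (r b) := by rw [hp1, hr1]; ring

lemma sum_negMulLog_le_card_mul_negMulLog_mean {α : Type*} (s : Finset α) {x : α → ℝ}
    (hx : ∀ a ∈ s, 0 ≤ x a) :
    ∑ a ∈ s, negMulLog (x a) ≤ s.card * negMulLog ((s.card : ℝ)⁻¹ * ∑ a ∈ s, x a) := by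
  rcases s.eq_empty_or_nonempty with rfl | hs
  · simp
  have hcard : (s.card : ℝ) ≠ 0 := by exact_mod_cast hs.card_pos.ne'
  have := concaveOn_negMulLog.le_map_sum (t := s) (w := fun _ => (s.card : ℝ)⁻¹)
    (fun _ _ => by positivity) (by simp [hcard]) hx
  simp only [smul_eq_mul, ← Finset.mul_sum] at this
  rwa [inv_mul_le_iff₀ (by positivity)] at this

end Real

lemma Finset.sum_range_sum_range_div_le_sum_range {M : Type*} [AddCommMonoid M]
    [PartialOrder M] [IsOrderedAddMonoid M] {g : ℕ → M} (hg : ∀ k, 0 ≤ g k) (m n : ℕ) :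
    ∑ r ∈ range m, ∑ j ∈ range ((n - r) / m), g (r + j * m) ≤ ∑ k ∈ range n, g k := by
  refine le_trans ?_ (sum_fiberwise_le_sum_of_sum_fiber_nonneg (t := range m) (g := (· % m))
    fun _ _ => sum_nonneg fun k _ => hg k)
  refine sum_le_sum fun r hr => ?_
  have hrm : r < m := mem_range.mp hr
  have hm : 0 < m := by omega
  rw [← sum_image fun i _ j _ h => Nat.eq_of_mul_eq_mul_right hm (by omega)]
  refine sum_le_sum_of_subset_of_nonneg (fun k hk => ?_) fun k _ _ => hg k
  obtain ⟨j, hj, rfl⟩ := mem_image.mp hk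
  refine mem_filter.mpr ⟨mem_range.mpr ?_, by simp [Nat.mod_eq_of_lt hrm]⟩
  have := (Nat.le_div_iff_mul_le hm).mp (mem_range.mp hj)
  rw [Nat.succ_mul] at this
  omega

namespace MeasureTheory

variable {X ι : Type*} {f : X → X} {P : ι → Set X}

-- The cells of `𝒫^n = ⋁_{j<n} f^{-j} 𝒫`, indexed by itineraries `a`; empty cells are kept.
def iterateJoin (f : X → X) (P : ι → Set X) (n : ℕ) (a : Fin n → ι) : Set X :=
  ⋂ j : Fin n, f^[j] ⁻¹' P (a j)

lemma iterateJoin_append (s t : ℕ) (a : Fin s → ι) (b : Fin t → ι) :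
    iterateJoin f P (s + t) (Fin.append a b) =
      iterateJoin f P s a ∩ f^[s] ⁻¹' iterateJoin f P t b := by
  ext x
  simp only [iterateJoin, Set.mem_iInter, Set.mem_inter_iff, Set.mem_preimage,
    Fin.forall_fin_add, Fin.append_left, Fin.append_right, Fin.val_castAdd, Fin.val_natAdd,
    ← Function.iterate_add_apply, add_comm s]

variable [MeasurableSpace X] {κ κ' : Type*}

structure IsMeasurablePartition (Q : κ → Set X) : Prop where
  measurableSet : ∀ k, MeasurableSet (Q k)
  pairwise_disjoint : Pairwise (Function.onFun Disjoint Q)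
  iUnion_eq_univ : ⋃ k, Q k = Set.univ

namespace IsMeasurablePartition

variable {Q : κ → Set X}

lemma exists_mem (hQ : IsMeasurablePartition Q) (x : X) : ∃ k, x ∈ Q k :=
  Set.mem_iUnion.mp (hQ.iUnion_eq_univ ▸ Set.mem_univ x)

lemma inter {R : κ' → Set X} (hQ : IsMeasurablePartition Q) (hR : IsMeasurablePartition R) :
    IsMeasurablePartition fun x : κ × κ' => Q x.1 ∩ R x.2 where
  measurableSet x := (hQ.measurableSet x.1).inter (hR.measurableSet x.2)
  pairwise_disjoint x y hxy := by
    obtain h | h : x.1 ≠ y.1 ∨ x.2 ≠ y.2 := by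
      by_contra! h; exact hxy (Prod.ext h.1 h.2)
    · exact (hQ.pairwise_disjoint h).mono Set.inter_subset_left Set.inter_subset_left
    · exact (hR.pairwise_disjoint h).mono Set.inter_subset_right Set.inter_subset_right
  iUnion_eq_univ := Set.eq_univ_of_forall fun x => by
    obtain ⟨a, ha⟩ := hQ.exists_mem x
    obtain ⟨b, hb⟩ := hR.exists_mem x
    exact Set.mem_iUnion.mpr ⟨(a, b), ha, hb⟩

lemma preimage (hQ : IsMeasurablePartition Q) {g : X → X} (hg : Measurable g) :
    IsMeasurablePartition fun k => g ⁻¹' Q k where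
  measurableSet k := hg (hQ.measurableSet k)
  pairwise_disjoint _ _ h := (hQ.pairwise_disjoint h).preimage g
  iUnion_eq_univ := by rw [← Set.preimage_iUnion, hQ.iUnion_eq_univ, Set.preimage_univ]

lemma iInter {J : Type*} [Countable J] {Q : J → κ → Set X}
    (hQ : ∀ j, IsMeasurablePartition (Q j)) :
    IsMeasurablePartition fun a : J → κ => ⋂ j, Q j (a j) where
  measurableSet a := .iInter fun j => (hQ j).measurableSet (a j)
  pairwise_disjoint a b hab := by
    obtain ⟨j, hj⟩ := Function.ne_iff.mp hab
    exact ((hQ j).pairwise_disjoint hj).mono (Set.iInter_subset _ j) (Set.iInter_subset _ j)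
  iUnion_eq_univ := Set.eq_univ_of_forall fun x => by
    choose a ha using fun j => (hQ j).exists_mem x
    exact Set.mem_iUnion.mpr ⟨a, Set.mem_iInter.mpr ha⟩

variable [Fintype κ]

lemma sum_toReal_measure_inter (hQ : IsMeasurablePartition Q) (ν : Measure X)
    [IsFiniteMeasure ν] {S : Set X} (hS : MeasurableSet S) :
    ∑ k, (ν (S ∩ Q k)).toReal = (ν S).toReal := by
  have hdisj : Pairwise (Function.onFun Disjoint fun k => S ∩ Q k) := fun k l hkl =>
    (hQ.pairwise_disjoint hkl).mono Set.inter_subset_right Set.inter_subset_right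
  calc ∑ k, (ν (S ∩ Q k)).toReal = (∑' k, ν (S ∩ Q k)).toReal := by
        rw [tsum_fintype, ENNReal.toReal_sum fun k _ => measure_ne_top ν _]
    _ = (ν S).toReal := by
        rw [← measure_iUnion hdisj fun k => hS.inter (hQ.measurableSet k), ← Set.inter_iUnion,
          hQ.iUnion_eq_univ, Set.inter_univ]

lemma sum_toReal_measure (hQ : IsMeasurablePartition Q) (ν : Measure X)
    [IsProbabilityMeasure ν] : ∑ k, (ν (Q k)).toReal = 1 := by
  simpa using hQ.sum_toReal_measure_inter ν MeasurableSet.univ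

end IsMeasurablePartition

variable [Fintype κ] [Fintype κ']

noncomputable def partitionEntropy (ν : Measure X) (Q : κ → Set X) : ℝ :=
  ∑ k, Real.negMulLog (ν (Q k)).toReal

lemma partitionEntropy_nonneg (ν : Measure X) [IsProbabilityMeasure ν] (Q : κ → Set X) :
    0 ≤ partitionEntropy ν Q :=
  Finset.sum_nonneg fun _ _ => Real.negMulLog_nonneg ENNReal.toReal_nonneg measureReal_le_one

lemma partitionEntropy_le_log_card {Q : κ → Set X} (hQ : IsMeasurablePartition Q)
    (ν : Measure X) [IsProbabilityMeasure ν] :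
    partitionEntropy ν Q ≤ Real.log (Fintype.card κ) :=
  Real.sum_negMulLog_le_log_card (fun _ => ENNReal.toReal_nonneg) (hQ.sum_toReal_measure ν)

lemma partitionEntropy_inter_le {Q : κ → Set X} {R : κ' → Set X}
    (hQ : IsMeasurablePartition Q) (hR : IsMeasurablePartition R)
    (ν : Measure X) [IsProbabilityMeasure ν] :
    partitionEntropy ν (fun x : κ × κ' => Q x.1 ∩ R x.2) ≤
      partitionEntropy ν Q + partitionEntropy ν R := by
  have hrow : ∀ a, ∑ b, (ν (Q a ∩ R b)).toReal = (ν (Q a)).toReal := fun a =>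
    hR.sum_toReal_measure_inter ν (hQ.measurableSet a)
  have hcol : ∀ b, ∑ a, (ν (Q a ∩ R b)).toReal = (ν (R b)).toReal := fun b => by
    simpa only [Set.inter_comm] using hQ.sum_toReal_measure_inter ν (hR.measurableSet b)
  have hsum := (hQ.inter hR).sum_toReal_measure ν
  rw [Fintype.sum_prod_type] at hsum
  have := Real.sum_sum_negMulLog_le (fun _ _ => ENNReal.toReal_nonneg) hsum
  simp only [hrow, hcol] at this
  rwa [partitionEntropy, Fintype.sum_prod_type]

lemma partitionEntropy_map {Q : κ → Set X} (hQ : ∀ k, MeasurableSet (Q k)) (ν : Measure X)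
    {g : X → X} (hg : Measurable g) :
    partitionEntropy (ν.map g) Q = partitionEntropy ν fun k => g ⁻¹' Q k := by
  simp only [partitionEntropy, Measure.map_apply hg (hQ _)]

lemma sum_partitionEntropy_le {α : Type*} (s : Finset α) (ν : α → Measure X)
    [∀ i, IsFiniteMeasure (ν i)] (Q : κ → Set X) :
    ∑ i ∈ s, partitionEntropy (ν i) Q ≤
      s.card * partitionEntropy ((s.card : ℝ≥0∞)⁻¹ • ∑ i ∈ s, ν i) Q := by
  simp only [partitionEntropy]
  rw [Finset.sum_comm, Finset.mul_sum]
  refine Finset.sum_le_sum fun k _ => ?_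
  have hmean : (((s.card : ℝ≥0∞)⁻¹ • ∑ i ∈ s, ν i) (Q k)).toReal =
      (s.card : ℝ)⁻¹ * ∑ i ∈ s, (ν i (Q k)).toReal := by
    rw [Measure.smul_apply, smul_eq_mul, ENNReal.toReal_mul, ENNReal.toReal_inv,
      ENNReal.toReal_natCast, Measure.finsetSum_apply,
      ENNReal.toReal_sum fun i _ => measure_ne_top _ _]
  rw [hmean]
  exact Real.sum_negMulLog_le_card_mul_negMulLog_mean s fun _ _ => ENNReal.toReal_nonneg

lemma IsMeasurablePartition.iterateJoin (hP : IsMeasurablePartition P) (hf : Measurable f)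
    (n : ℕ) : IsMeasurablePartition (iterateJoin f P n) :=
  IsMeasurablePartition.iInter (Q := fun (j : Fin n) i => f^[j] ⁻¹' P i) fun j =>
    hP.preimage (hf.iterate j)

variable [Fintype ι]

lemma partitionEntropy_iterateJoin_le (hP : IsMeasurablePartition P) (hf : Measurable f)
    (ν : Measure X) [IsProbabilityMeasure ν] (n : ℕ) :
    partitionEntropy ν (iterateJoin f P n) ≤ n * Real.log (Fintype.card ι) := by
  simpa [Real.log_pow] using partitionEntropy_le_log_card (hP.iterateJoin hf n) ν

lemma partitionEntropy_iterateJoin_add_le (hP : IsMeasurablePartition P) (hf : Measurable f)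
    (ν : Measure X) [IsProbabilityMeasure ν] (s t : ℕ) :
    partitionEntropy ν (iterateJoin f P (s + t)) ≤
      partitionEntropy ν (iterateJoin f P s) +
        partitionEntropy (ν.map f^[s]) (iterateJoin f P t) := by
  have hsplit : partitionEntropy ν (iterateJoin f P (s + t)) =
      partitionEntropy ν fun x : (Fin s → ι) × (Fin t → ι) =>
        iterateJoin f P s x.1 ∩ f^[s] ⁻¹' iterateJoin f P t x.2 := by
    simp only [partitionEntropy, ← iterateJoin_append]
    exact (Equiv.sum_comp (Fin.appendEquiv s t) _).symm
  rw [hsplit, partitionEntropy_map (hP.iterateJoin hf t).measurableSet ν (hf.iterate s)]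
  exact partitionEntropy_inter_le (hP.iterateJoin hf s) ((hP.iterateJoin hf t).preimage
    (hf.iterate s)) ν

lemma partitionEntropy_iterateJoin_add_mul_le (hP : IsMeasurablePartition P)
    (hf : Measurable f) (μ : Measure X) [IsProbabilityMeasure μ] (c m q : ℕ) :
    partitionEntropy μ (iterateJoin f P (c + q * m)) ≤
      partitionEntropy μ (iterateJoin f P c) +
        ∑ j ∈ Finset.range q, partitionEntropy (μ.map f^[c + j * m]) (iterateJoin f P m) := by
  induction q with
  | zero => rw [zero_mul, add_zero, Finset.sum_range_zero, add_zero]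
  | succ q ih =>
    rw [Finset.sum_range_succ, ← add_assoc, show c + (q + 1) * m = c + q * m + m by ring]
    exact (partitionEntropy_iterateJoin_add_le hP hf μ _ m).trans (by gcongr)

lemma partitionEntropy_iterateJoin_le_sum_blocks (hP : IsMeasurablePartition P)
    (hf : Measurable f) (μ : Measure X) [IsProbabilityMeasure μ] {n m r : ℕ} (hr : r < m)
    (hrn : r ≤ n) :
    partitionEntropy μ (iterateJoin f P n) ≤
      ∑ j ∈ Finset.range ((n - r) / m),
          partitionEntropy (μ.map f^[r + j * m]) (iterateJoin f P m) +
        2 * m * Real.log (Fintype.card ι) := by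
  have hs : (n - r) % m < m := Nat.mod_lt _ (by omega)
  have hdm := Nat.div_add_mod' (n - r) m
  generalize (n - r) / m = q at hdm ⊢
  generalize (n - r) % m = s at hdm hs
  obtain rfl : n = r + q * m + s := by omega
  have : IsProbabilityMeasure (μ.map f^[r + q * m]) :=
    Measure.isProbabilityMeasure_map (hf.iterate _).aemeasurable
  have hL : 0 ≤ Real.log (Fintype.card ι) := by positivity
  calc _ ≤ partitionEntropy μ (iterateJoin f P r) +
          ∑ j ∈ Finset.range q, partitionEntropy (μ.map f^[r + j * m]) (iterateJoin f P m) +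
          partitionEntropy (μ.map f^[r + q * m]) (iterateJoin f P s) :=
        (partitionEntropy_iterateJoin_add_le hP hf μ _ s).trans
          (by gcongr; exact partitionEntropy_iterateJoin_add_mul_le hP hf μ r m q)
    _ ≤ r * Real.log (Fintype.card ι) +
          ∑ j ∈ Finset.range q, partitionEntropy (μ.map f^[r + j * m]) (iterateJoin f P m) +
          s * Real.log (Fintype.card ι) := by
        gcongr <;> exact partitionEntropy_iterateJoin_le hP hf _ _
    _ ≤ _ := by
        have : (r : ℝ) + s ≤ 2 * m := by norm_cast; omega
        nlinarith

end MeasureTheory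

/-- For a probability measure `μ` (not necessarily invariant), a measurable map `f`,
and a finite measurable partition `P` (indexed by `ι`), with `H ν n` denoting the static
entropy `H_ν(P^n)` of the join `P^n = ⋁_{j<n} f^{-j}P`, one has for `0 < m < n`:
`(1/n) H_μ(P^n) ≤ (1/m) H_{μ_n}(P^m) + (2m/n) log #P`,
where `μ_n = (1/n) ∑_{k<n} μ ∘ f^{-k}`. -/
theorem entropy_average_measure_bound
    {X : Type*} [MeasurableSpace X] (μ : Measure X) [IsProbabilityMeasure μ]
    (f : X → X) (hf : Measurable f)
    {ι : Type*} [Fintype ι] (P : ι → Set X)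
    (hmeas : ∀ i, MeasurableSet (P i))
    (hdisj : Pairwise (Function.onFun Disjoint P))
    (hcover : ⋃ i, P i = Set.univ)
    (H : Measure X → ℕ → ℝ)
    (hH : ∀ (ν : Measure X) (n : ℕ),
      H ν n = ∑ a : Fin n → ι,
        Real.negMulLog ((ν (⋂ j : Fin n, f^[(j : ℕ)] ⁻¹' P (a j))).toReal))
    (n m : ℕ) (hm : 0 < m) (hmn : m < n) :
    (1 / (n : ℝ)) * H μ n ≤
      (1 / (m : ℝ)) * H ((n : ℝ≥0∞)⁻¹ • ∑ k ∈ Finset.range n, Measure.map f^[k] μ) m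
        + (2 * (m : ℝ) / (n : ℝ)) * Real.log (Fintype.card ι) := by
  obtain rfl : H = fun ν k => partitionEntropy ν (iterateJoin f P k) := funext₂ hH
  have hP : IsMeasurablePartition P := ⟨hmeas, hdisj, hcover⟩
  set L := Real.log (Fintype.card ι)
  set G := fun k => partitionEntropy (μ.map f^[k]) (iterateJoin f P m)
  have hG : ∀ k, 0 ≤ G k := fun k =>
    have := Measure.isProbabilityMeasure_map (μ := μ) (hf.iterate k).aemeasurable
    partitionEntropy_nonneg _ _
  have hresidue : ∀ r ∈ Finset.range m, partitionEntropy μ (iterateJoin f P n) ≤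
      ∑ j ∈ Finset.range ((n - r) / m), G (r + j * m) + 2 * m * L := fun r hr =>
    partitionEntropy_iterateJoin_le_sum_blocks hP hf μ (Finset.mem_range.mp hr)
      ((Finset.mem_range.mp hr).le.trans hmn.le)
  have hresidues : m * partitionEntropy μ (iterateJoin f P n) ≤
      ∑ k ∈ Finset.range n, G k + m * (2 * m * L) :=
    calc (m : ℝ) * partitionEntropy μ (iterateJoin f P n)
        ≤ ∑ r ∈ Finset.range m,
            (∑ j ∈ Finset.range ((n - r) / m), G (r + j * m) + 2 * m * L) := by
          simpa using Finset.sum_le_sum hresidue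
      _ ≤ ∑ k ∈ Finset.range n, G k + m * (2 * m * L) := by
          rw [Finset.sum_add_distrib, Finset.sum_const, Finset.card_range, nsmul_eq_mul]
          gcongr
          exact Finset.sum_range_sum_range_div_le_sum_range hG m n
  have havg : ∑ k ∈ Finset.range n, G k ≤ n * partitionEntropy
      ((n : ℝ≥0∞)⁻¹ • ∑ k ∈ Finset.range n, μ.map f^[k]) (iterateJoin f P m) := by
    simpa using
      sum_partitionEntropy_le (Finset.range n) (fun k => μ.map f^[k]) (iterateJoin f P m)
  have hn₀ : (0 : ℝ) < n := by exact_mod_cast hm.trans hmn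
  have hm₀ : (0 : ℝ) < m := by exact_mod_cast hm
  field_simp
  nlinarith
end

section
/- Let E and F be finite-dimensional real inner product spaces, and let A : E ⊕ F → E ⊕ F be a linear map preserving the splitting, i.e., A(E) ⊆ E and A(F) ⊆ F. Assume A|_F is invertible with m(A|_F) := inf_{‖v‖=1, v∈F} ‖A v‖ > 0 and ‖A|_E‖ ≤ e^{-λ} m(A|_F) for some λ > 0. Let φ : D → E be a Lipschitz map defined on a subset D ⊆ F with Lip(φ) ≤ 1/3. Then the image A(graph(φ)) = {A(u + φ(u)) : u ∈ D} is the graph of a Lipschitz map Φ : A(D) → E with Lip(Φ) ≤ (1/3)·e^{-λ}, where graph(φ) = {u + φ(u) : u ∈ D}. -/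
/-- Graph transform under a dominated linear map. If `A` preserves the splitting `E ⊕ F`,
`A|_F` is invertible with co-norm `m(A|_F) > 0`, and `‖A|_E‖ ≤ e^{-λ} m(A|_F)`, then the
image under `A` of the graph of a `1/3`-Lipschitz map `φ : D ⊆ F → E` is the graph of a
Lipschitz map `Φ` over `A|_F(D)` with `Lip(Φ) ≤ (1/3) e^{-λ}`. -/
theorem graph_transform_dominated
    {E F : Type*} [NormedAddCommGroup E] [InnerProductSpace ℝ E] [FiniteDimensional ℝ E]
    [NormedAddCommGroup F] [InnerProductSpace ℝ F] [FiniteDimensional ℝ F]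
    (A : E × F →ₗ[ℝ] E × F)
    (hAE : ∀ e : E, (A (e, 0)).2 = 0) (hAF : ∀ v : F, (A (0, v)).1 = 0)
    (lam : ℝ) (hlam : 0 < lam)
    (hbij : Function.Bijective (fun v : F => (A (0, v)).2))
    (hm : 0 < ⨅ v : Metric.sphere (0 : F) 1, ‖A (0, (v : F))‖)
    (hE' : ∀ e : E,
      ‖A (e, 0)‖ ≤ Real.exp (-lam) * (⨅ v : Metric.sphere (0 : F) 1, ‖A (0, (v : F))‖) * ‖e‖)
    (D : Set F) (φ : F → E)
    (hφ : ∀ u₁ ∈ D, ∀ u₂ ∈ D, ‖φ u₁ - φ u₂‖ ≤ (1 / 3) * ‖u₁ - u₂‖) :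
    ∃ Φ : F → E,
      (∀ u ∈ D, A (φ u, u) = (Φ ((A (0, u)).2), (A (0, u)).2)) ∧
      ∀ u₁ ∈ D, ∀ u₂ ∈ D,
        ‖Φ ((A (0, u₁)).2) - Φ ((A (0, u₂)).2)‖ ≤
          (1 / 3) * Real.exp (-lam) * ‖(A (0, u₁)).2 - (A (0, u₂)).2‖ := by
  set m := ⨅ v : Metric.sphere (0 : F) 1, ‖A (0, (v : F))‖ with hmdef
  set g := Function.invFun (fun v : F => (A (0, v)).2) with hgdef
  have hleft : ∀ u : F, g ((A (0, u)).2) = u :=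
    Function.leftInverse_invFun hbij.injective
  -- key co-norm bound: m * ‖v‖ ≤ ‖A (0, v)‖
  have hco : ∀ v : F, m * ‖v‖ ≤ ‖A (0, v)‖ := by
    intro v
    rcases eq_or_ne v 0 with rfl | hv
    · simp
    · have hnv : (0:ℝ) < ‖v‖ := norm_pos_iff.mpr hv
      have hmem : (‖v‖⁻¹ • v) ∈ Metric.sphere (0 : F) 1 := by
        simp [norm_smul, abs_of_pos (inv_pos.mpr hnv), inv_mul_cancel₀ hnv.ne']
      have hb : BddBelow (Set.range fun v : Metric.sphere (0 : F) 1 => ‖A (0, (v : F))‖) :=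
        ⟨0, by rintro _ ⟨w, rfl⟩; positivity⟩
      have hle : m ≤ ‖A (0, ‖v‖⁻¹ • v)‖ := ciInf_le hb (⟨_, hmem⟩ : Metric.sphere (0 : F) 1)
      have heq : A (0, ‖v‖⁻¹ • v) = ‖v‖⁻¹ • A (0, v) := by
        rw [← map_smul]; norm_num
      rw [heq, norm_smul, norm_inv, norm_norm] at hle
      calc m * ‖v‖ ≤ ‖v‖⁻¹ * ‖A (0, v)‖ * ‖v‖ := by nlinarith
        _ = ‖A (0, v)‖ := by field_simp
  have hsplit : ∀ e : E, ∀ v : F, A (e, v) = A (e, 0) + A (0, v) := by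
    intro e v
    rw [← map_add]; norm_num
  have hnorm2 : ∀ v : F, ‖A (0, v)‖ = ‖(A (0, v)).2‖ := by
    intro v
    rw [Prod.norm_def, hAF v]
    simp
  refine ⟨fun w => (A (φ (g w), 0)).1, ?_, ?_⟩
  · intro u hu
    simp only [hleft]; rw [hsplit]
    ext
    · simp [hAF]
    · simp [hAE]
  · intro u₁ h₁ u₂ h₂
    simp only [hleft]
    have h1 : (A (φ u₁, 0)).1 - (A (φ u₂, 0)).1 = (A (φ u₁ - φ u₂, 0)).1 := by
      rw [show ((φ u₁ - φ u₂ : E), (0:F)) = (φ u₁, (0:F)) - (φ u₂, 0) by simp, map_sub]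
      rfl
    have h2 : ‖(A (φ u₁ - φ u₂, 0)).1‖ ≤ ‖A (φ u₁ - φ u₂, 0)‖ := norm_fst_le _
    have h3 := hE' (φ u₁ - φ u₂)
    have h4 := hφ u₁ h₁ u₂ h₂
    have h5 : m * ‖u₁ - u₂‖ ≤ ‖(A (0, u₁)).2 - (A (0, u₂)).2‖ := by
      have : ((0:E), u₁ - u₂) = ((0:E), u₁) - (0, u₂) := by simp
      have h6 := hco (u₁ - u₂)
      rw [hnorm2, this, map_sub] at h6
      exact h6
    have hexp : (0:ℝ) < Real.exp (-lam) := Real.exp_pos _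
    rw [h1]
    calc ‖(A (φ u₁ - φ u₂, 0)).1‖ ≤ Real.exp (-lam) * m * ‖φ u₁ - φ u₂‖ := h2.trans h3
      _ ≤ Real.exp (-lam) * m * ((1/3) * ‖u₁ - u₂‖) := by
          apply mul_le_mul_of_nonneg_left h4; positivity
      _ = (1/3) * Real.exp (-lam) * (m * ‖u₁ - u₂‖) := by ring
      _ ≤ (1/3) * Real.exp (-lam) * ‖(A (0, u₁)).2 - (A (0, u₂)).2‖ := by
          apply mul_le_mul_of_nonneg_left h5; positivity
end

section
/- Let E and F be finite-dimensional normed spaces, λ > 0, and let L : E ⊕ F → E ⊕ F be linear with L(E) ⊆ E, L(F) ⊆ F, m(L|_F) ≥ c > 0, and ‖L|_E‖ ≤ e^{-λ} m(L|_F). Let π^E, π^F denote the projections onto E and F with max{‖π^E‖, ‖π^F‖} ≤ C_ang. Suppose h : E ⊕ F → E ⊕ F is Lipschitz with Lip(h) ≤ δ where 20·C_ang·δ < (1 − e^{-λ})·c. Let φ : D → E with D ⊆ F open, φ(0) = 0, Lip(φ) ≤ 1/3, and set G = L + h with h(0)=0, G(0)=0. Then the map T : D → F, T(u) = π^F(G(u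 + φ(u))), is injective, T is an open map onto its image V = T(D), and the map Φ : V → E defined by Φ(v) = π^E(G(T^{-1}(v) + φ(T^{-1}(v)))) satisfies graph(Φ) = G(graph(φ)) and Lip(Φ) ≤ 1/3. -/
set_option maxHeartbeats 1000000


/-- Nonlinear graph transform. Let `L` be linear preserving the splitting `E ⊕ F`, with
co-norm `m(L|_F) ≥ c > 0` and `‖L|_E‖ ≤ e^{-λ} m(L|_F)`; let `h` be `δ`-Lipschitz with
`20 C_ang δ < (1-e^{-λ}) c`, and `G = L + h` with `G 0 = 0`. For a `1/3`-Lipschitz map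
`φ : D → E` on an open `D ⊆ F` with `φ 0 = 0`, the map `T u = π^F(G(u + φ u))` is injective
on `D`, `T(D)` is open, and `G(graph φ)` is the graph of a `1/3`-Lipschitz map `Φ` on `T(D)`. -/
theorem nonlinear_graph_transform
    {E F : Type*} [NormedAddCommGroup E] [NormedSpace ℝ E] [FiniteDimensional ℝ E]
    [NormedAddCommGroup F] [NormedSpace ℝ F] [FiniteDimensional ℝ F]
    (L : E × F →ₗ[ℝ] E × F) (lam c C_ang δ : ℝ)
    (hlam : 0 < lam) (hc : 0 < c) (hC : 1 ≤ C_ang)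
    (hLE : ∀ e : E, (L (e, 0)).2 = 0) (hLF : ∀ v : F, (L (0, v)).1 = 0)
    (hm : c ≤ ⨅ v : Metric.sphere (0 : F) 1, ‖L (0, (v : F))‖)
    (hnormE : ∀ e : E,
      ‖L (e, 0)‖ ≤ Real.exp (-lam) * (⨅ v : Metric.sphere (0 : F) 1, ‖L (0, (v : F))‖) * ‖e‖)
    (hδ : 20 * C_ang * δ < (1 - Real.exp (-lam)) * c)
    (h : E × F → E × F) (hh0 : h 0 = 0)
    (hLip : ∀ p q : E × F, ‖h p - h q‖ ≤ δ * ‖p - q‖)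
    (D : Set F) (hD : IsOpen D) (φ : F → E) (hφ0 : φ 0 = 0)
    (hφ : ∀ u₁ ∈ D, ∀ u₂ ∈ D, ‖φ u₁ - φ u₂‖ ≤ (1 / 3) * ‖u₁ - u₂‖)
    (G : E × F → E × F) (hG : ∀ p, G p = L p + h p)
    (T : F → F) (hT : ∀ u, T u = (G (φ u, u)).2) :
    Set.InjOn T D ∧ IsOpen (T '' D) ∧
      ∃ Φ : F → E, (∀ u ∈ D, G (φ u, u) = (Φ (T u), T u)) ∧
        ∀ u₁ ∈ D, ∀ u₂ ∈ D, ‖Φ (T u₁) - Φ (T u₂)‖ ≤ (1 / 3) * ‖T u₁ - T u₂‖ := by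
  classical
  set m : ℝ := ⨅ v : Metric.sphere (0 : F) 1, ‖L (0, (v : F))‖ with hm_def
  have hmpos : 0 < m := lt_of_lt_of_le hc hm
  have hexp0 : 0 < Real.exp (-lam) := Real.exp_pos _
  have hexp1 : Real.exp (-lam) < 1 := by
    calc Real.exp (-lam) < Real.exp 0 := Real.exp_lt_exp.2 (by linarith)
      _ = 1 := Real.exp_zero
  have hFnt : Nontrivial F := by
    by_contra hnt
    rw [not_nontrivial_iff_subsingleton] at hnt
    have hE : IsEmpty (Metric.sphere (0 : F) 1) := by
      constructor
      rintro ⟨v, hv⟩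
      rw [mem_sphere_zero_iff_norm, Subsingleton.elim v 0] at hv
      simp at hv
    rw [hm_def, iInf_of_isEmpty, Real.sInf_empty] at hmpos
    exact lt_irrefl _ hmpos
  have hδ0 : 0 ≤ δ := by
    obtain ⟨v, hv⟩ := exists_ne (0 : F)
    have h1 := hLip ((0 : E), v) 0
    rw [hh0, sub_zero, sub_zero] at h1
    have h2 : ‖((0 : E), v)‖ = ‖v‖ := by
      rw [Prod.norm_def]; simp
    rw [h2] at h1
    have h3 : 0 < ‖v‖ := norm_pos_iff.2 hv
    nlinarith [norm_nonneg (h ((0 : E), v))]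
  have hδc : 20 * δ < (1 - Real.exp (-lam)) * c := by nlinarith
  have hδm : 20 * δ < (1 - Real.exp (-lam)) * m := by nlinarith
  have hδltm : δ < m := by nlinarith
  have hmδ : 0 < m - δ := by linarith
  -- norm of a pair with vanishing first component
  have hsnd : ∀ p : E × F, p.1 = 0 → ‖p‖ = ‖p.2‖ := by
    intro p hp
    rw [Prod.norm_def, hp, norm_zero]
    exact max_eq_right (norm_nonneg _)
  -- co-norm lower bound
  have hlow : ∀ w : F, m * ‖w‖ ≤ ‖L (0, w)‖ := by
    intro w
    rcases eq_or_ne w 0 with rfl | hw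
    · simp
    · have hwn : ‖w‖ ≠ 0 := norm_ne_zero_iff.2 hw
      set v : F := ‖w‖⁻¹ • w with hv_def
      have hv1 : ‖v‖ = 1 := by
        rw [hv_def, norm_smul, norm_inv, norm_norm, inv_mul_cancel₀ hwn]
      have hvs : v ∈ Metric.sphere (0 : F) 1 := by rwa [mem_sphere_zero_iff_norm]
      have h1 : m ≤ ‖L (0, v)‖ := by
        rw [hm_def]
        exact ciInf_le ⟨0, by rintro x ⟨y, rfl⟩; exact norm_nonneg _⟩
          (⟨v, hvs⟩ : Metric.sphere (0 : F) 1)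
      have h2 : ((0 : E), w) = ‖w‖ • ((0 : E), v) := by
        rw [Prod.smul_mk, smul_zero, hv_def, smul_smul, mul_inv_cancel₀ hwn, one_smul]
      rw [h2, map_smul, norm_smul, norm_norm]
      calc m * ‖w‖ = ‖w‖ * m := mul_comm _ _
        _ ≤ ‖w‖ * ‖L (0, v)‖ := mul_le_mul_of_nonneg_left h1 (norm_nonneg w)
  -- difference of G along the graph
  have hGsub : ∀ u₁ u₂ : F, G (φ u₁, u₁) - G (φ u₂, u₂)
      = L (φ u₁ - φ u₂, 0) + L (0, u₁ - u₂) + (h (φ u₁, u₁) - h (φ u₂, u₂)) := by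
    intro u₁ u₂
    rw [hG, hG]
    have e1 : ((φ u₁ - φ u₂, (0 : F)) : E × F) + ((0 : E), u₁ - u₂)
        = (φ u₁, u₁) - (φ u₂, u₂) := by
      simp [Prod.ext_iff]
    rw [← map_add, e1, map_sub]
    abel
  -- Lipschitz bound for h along the graph
  have hhd : ∀ u₁ ∈ D, ∀ u₂ ∈ D, ‖h (φ u₁, u₁) - h (φ u₂, u₂)‖ ≤ δ * ‖u₁ - u₂‖ := by
    intro u₁ h₁ u₂ h₂
    calc ‖h (φ u₁, u₁) - h (φ u₂, u₂)‖ ≤ δ * ‖((φ u₁, u₁) : E × F) - (φ u₂, u₂)‖ := hLip _ _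
      _ ≤ δ * ‖u₁ - u₂‖ := by
          apply mul_le_mul_of_nonneg_left _ hδ0
          rw [Prod.mk_sub_mk, Prod.norm_def]
          exact max_le (le_trans (hφ u₁ h₁ u₂ h₂) (by nlinarith [norm_nonneg (u₁ - u₂)]))
            le_rfl
  -- lower bound for T differences
  have hTd : ∀ u₁ ∈ D, ∀ u₂ ∈ D, (m - δ) * ‖u₁ - u₂‖ ≤ ‖T u₁ - T u₂‖ := by
    intro u₁ h₁ u₂ h₂
    have e1 : T u₁ - T u₂ = (G (φ u₁, u₁) - G (φ u₂, u₂)).2 := by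
      rw [hT, hT]; rfl
    rw [e1, hGsub u₁ u₂]
    have e2 : (L (φ u₁ - φ u₂, 0) + L (0, u₁ - u₂) + (h (φ u₁, u₁) - h (φ u₂, u₂))).2
        = (L (0, u₁ - u₂)).2 + (h (φ u₁, u₁) - h (φ u₂, u₂)).2 := by
      simp [hLE]
    rw [e2]
    have e3 : ‖(L ((0 : E), u₁ - u₂)).2‖ = ‖L ((0 : E), u₁ - u₂)‖ :=
      (hsnd _ (hLF _)).symm
    have h4 : ‖(h (φ u₁, u₁) - h (φ u₂, u₂)).2‖ ≤ δ * ‖u₁ - u₂‖ :=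
      le_trans (norm_snd_le _) (hhd u₁ h₁ u₂ h₂)
    have h5 := hlow (u₁ - u₂)
    have h6 : ‖(L ((0 : E), u₁ - u₂)).2‖
        ≤ ‖(L ((0 : E), u₁ - u₂)).2 + (h (φ u₁, u₁) - h (φ u₂, u₂)).2‖
          + ‖(h (φ u₁, u₁) - h (φ u₂, u₂)).2‖ := by
      have e4 : (L ((0 : E), u₁ - u₂)).2
          = ((L ((0 : E), u₁ - u₂)).2 + (h (φ u₁, u₁) - h (φ u₂, u₂)).2)
            - (h (φ u₁, u₁) - h (φ u₂, u₂)).2 := by abel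
      calc ‖(L ((0 : E), u₁ - u₂)).2‖
          = ‖((L ((0 : E), u₁ - u₂)).2 + (h (φ u₁, u₁) - h (φ u₂, u₂)).2)
            - (h (φ u₁, u₁) - h (φ u₂, u₂)).2‖ := by rw [← e4]
        _ ≤ _ := norm_sub_le _ _
    linarith [e3 ▸ h5]
  -- injectivity
  have hinj : Set.InjOn T D := by
    intro u₁ h₁ u₂ h₂ he
    have h1 := hTd u₁ h₁ u₂ h₂
    rw [he, sub_self, norm_zero] at h1
    have h2 : ‖u₁ - u₂‖ = 0 :=
      le_antisymm (by nlinarith [norm_nonneg (u₁ - u₂)]) (norm_nonneg _)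
    rwa [norm_eq_zero, sub_eq_zero] at h2
  -- the linear map A = π^F ∘ L|_F and its inverse
  let A : F →ₗ[ℝ] F :=
    { toFun := fun w => (L (0, w)).2
      map_add' := fun x y => by
        show (L (0, x + y)).2 = (L (0, x)).2 + (L (0, y)).2
        have e : ((0 : E), x + y) = ((0 : E), x) + ((0 : E), y) := by simp
        rw [e, map_add]; rfl
      map_smul' := fun r x => by
        show (L (0, r • x)).2 = (RingHom.id ℝ) r • (L (0, x)).2
        have e : ((0 : E), r • x) = r • ((0 : E), x) := by simp
        rw [e, map_smul]; rfl }
  have hAdef : ∀ w, A w = (L (0, w)).2 := fun _ => rfl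
  have hAlow : ∀ w, m * ‖w‖ ≤ ‖A w‖ := by
    intro w
    rw [hAdef, ← hsnd _ (hLF w)]
    exact hlow w
  have hAinj : Function.Injective A := by
    intro x y hxy
    have h1 := hAlow (x - y)
    rw [map_sub, hxy, sub_self, norm_zero] at h1
    have h2 : ‖x - y‖ = 0 :=
      le_antisymm (by nlinarith [norm_nonneg (x - y)]) (norm_nonneg _)
    rwa [norm_eq_zero, sub_eq_zero] at h2
  have hAsurj : Function.Surjective A := LinearMap.injective_iff_surjective.1 hAinj
  let Aeq : F ≃ₗ[ℝ] F := LinearEquiv.ofBijective A ⟨hAinj, hAsurj⟩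
  let B : F →ₗ[ℝ] F := Aeq.symm
  have hAB : ∀ x, A (B x) = x := fun x => Aeq.apply_symm_apply x
  have hBA : ∀ x, B (A x) = x := fun x => Aeq.symm_apply_apply x
  have hBbound : ∀ x, ‖B x‖ ≤ m⁻¹ * ‖x‖ := by
    intro x
    have h1 := hAlow (B x)
    rw [hAB] at h1
    calc ‖B x‖ = m⁻¹ * (m * ‖B x‖) := by field_simp
      _ ≤ m⁻¹ * ‖x‖ := mul_le_mul_of_nonneg_left h1 (by positivity)
  -- the nonlinear part
  set g : F → F := fun u => (h (φ u, u)).2 with hg_def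
  have hTAg : ∀ u, T u = A u + g u := by
    intro u
    have e1 : ((φ u, u) : E × F) = (φ u, 0) + (0, u) := by simp
    have e2 : (L (φ u, u)).2 = A u := by
      rw [hAdef, e1, map_add, Prod.snd_add, hLE, zero_add]
    rw [hT, hG, Prod.snd_add, e2]
  have hgd : ∀ u₁ ∈ D, ∀ u₂ ∈ D, ‖g u₁ - g u₂‖ ≤ δ * ‖u₁ - u₂‖ := by
    intro u₁ h₁ u₂ h₂
    have e1 : g u₁ - g u₂ = (h (φ u₁, u₁) - h (φ u₂, u₂)).2 := rfl
    rw [e1]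
    exact le_trans (norm_snd_le _) (hhd u₁ h₁ u₂ h₂)
  -- openness of the image
  have hopen : IsOpen (T '' D) := by
    rw [Metric.isOpen_iff]
    rintro v₀ ⟨u₀, hu₀, rfl⟩
    obtain ⟨ε, hε, hball⟩ := Metric.isOpen_iff.1 hD u₀ hu₀
    set r : ℝ := ε / 2 with hr_def
    have hr : 0 < r := by positivity
    have hsub : Metric.closedBall u₀ r ⊆ D :=
      (Metric.closedBall_subset_ball (by rw [hr_def]; linarith)).trans hball
    refine ⟨m * r / 2, by positivity, ?_⟩
    intro v hv
    rw [Metric.mem_ball, dist_eq_norm] at hv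
    set Ψ : F → F := fun u => B (v - g u) with hΨ
    have hu₀fix : B (T u₀ - g u₀) = u₀ := by
      have e : T u₀ - g u₀ = A u₀ := by rw [hTAg]; abel
      rw [e, hBA]
    have hmaps : Set.MapsTo Ψ (Metric.closedBall u₀ r) (Metric.closedBall u₀ r) := by
      intro u hu
      have huD : u ∈ D := hsub hu
      rw [Metric.mem_closedBall, dist_eq_norm] at hu ⊢
      have e1 : Ψ u - u₀ = B ((v - T u₀) - (g u - g u₀)) := by
        calc Ψ u - u₀ = B (v - g u) - B (T u₀ - g u₀) := by rw [hu₀fix]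
          _ = B ((v - g u) - (T u₀ - g u₀)) := (map_sub B _ _).symm
          _ = B ((v - T u₀) - (g u - g u₀)) := by congr 1; abel
      rw [e1]
      have e3 : ‖g u - g u₀‖ ≤ δ * ‖u - u₀‖ := hgd u huD u₀ hu₀
      calc ‖B ((v - T u₀) - (g u - g u₀))‖ ≤ m⁻¹ * ‖(v - T u₀) - (g u - g u₀)‖ := hBbound _
        _ ≤ m⁻¹ * (m * r / 2 + δ * r) := by
            apply mul_le_mul_of_nonneg_left _ (by positivity)
            calc ‖(v - T u₀) - (g u - g u₀)‖ ≤ ‖v - T u₀‖ + ‖g u - g u₀‖ := norm_sub_le _ _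
              _ ≤ m * r / 2 + δ * r := by nlinarith
        _ ≤ r := by
            have hδm20 : δ ≤ m / 20 := by nlinarith
            rw [inv_mul_le_iff₀ hmpos]
            nlinarith [mul_le_mul_of_nonneg_right hδm20 hr.le, mul_pos hmpos hr]
    have hK : ContractingWith (1 / 2 : NNReal)
        (hmaps.restrict Ψ (Metric.closedBall u₀ r) (Metric.closedBall u₀ r)) := by
      constructor
      · rw [← NNReal.coe_lt_coe]; norm_num
      · apply LipschitzWith.of_dist_le_mul
        rintro ⟨x, hx⟩ ⟨y, hy⟩
        have hc2 : ((1 / 2 : NNReal) : ℝ) = 1 / 2 := by norm_num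
        rw [Subtype.dist_eq, Subtype.dist_eq, Set.MapsTo.val_restrict_apply,
          Set.MapsTo.val_restrict_apply, hc2, dist_eq_norm, dist_eq_norm]
        have e1 : Ψ x - Ψ y = B (g y - g x) := by
          calc Ψ x - Ψ y = B (v - g x) - B (v - g y) := rfl
            _ = B ((v - g x) - (v - g y)) := (map_sub B _ _).symm
            _ = B (g y - g x) := by congr 1; abel
        have e3 : ‖g y - g x‖ ≤ δ * ‖y - x‖ := hgd y (hsub hy) x (hsub hx)
        calc ‖Ψ x - Ψ y‖ = ‖B (g y - g x)‖ := by rw [e1]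
          _ ≤ m⁻¹ * ‖g y - g x‖ := hBbound _
          _ ≤ m⁻¹ * (δ * ‖y - x‖) :=
              mul_le_mul_of_nonneg_left e3 (by positivity)
          _ ≤ 1 / 2 * ‖x - y‖ := by
              have hδm20 : δ ≤ m / 20 := by nlinarith
              rw [norm_sub_rev y x, inv_mul_le_iff₀ hmpos]
              nlinarith [norm_nonneg (x - y),
                mul_le_mul_of_nonneg_right hδm20 (norm_nonneg (x - y)), hmpos]
    obtain ⟨y, hys, hyfix, -, -⟩ :=
      hK.exists_fixedPoint' Metric.isClosed_closedBall.isComplete hmaps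
        (Metric.mem_closedBall_self hr.le) (edist_ne_top _ _)
    refine ⟨y, hsub hys, ?_⟩
    have h1 : Ψ y = y := hyfix
    have h2 : A y = v - g y := by
      conv_lhs => rw [← h1]
      exact hAB _
    rw [hTAg, h2]
    abel
  -- construction of Φ
  have hΦex : ∃ Φ : F → E, ∀ u ∈ D, Φ (T u) = (G (φ u, u)).1 := by
    refine ⟨fun v => if hv : ∃ u ∈ D, T u = v then (G (φ hv.choose, hv.choose)).1 else 0, ?_⟩
    intro u hu
    have hex : ∃ u' ∈ D, T u' = T u := ⟨u, hu, rfl⟩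
    simp only [dif_pos hex]
    obtain ⟨h1, h2⟩ := hex.choose_spec
    rw [hinj h1 hu h2]
  obtain ⟨Φ, hΦ⟩ := hΦex
  refine ⟨hinj, hopen, Φ, ?_, ?_⟩
  · intro u hu
    have e1 : G (φ u, u) = ((G (φ u, u)).1, (G (φ u, u)).2) := rfl
    rw [e1, hΦ u hu, hT]
  · intro u₁ h₁ u₂ h₂
    rw [hΦ u₁ h₁, hΦ u₂ h₂]
    have e1 : (G (φ u₁, u₁)).1 - (G (φ u₂, u₂)).1 = (G (φ u₁, u₁) - G (φ u₂, u₂)).1 := rfl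
    rw [e1, hGsub u₁ u₂]
    have e2 : (L (φ u₁ - φ u₂, 0) + L (0, u₁ - u₂) + (h (φ u₁, u₁) - h (φ u₂, u₂))).1
        = (L (φ u₁ - φ u₂, 0)).1 + (h (φ u₁, u₁) - h (φ u₂, u₂)).1 := by
      simp [hLF]
    rw [e2]
    have h3 : ‖(L (φ u₁ - φ u₂, (0 : F))).1‖ ≤ Real.exp (-lam) * m * ((1 / 3) * ‖u₁ - u₂‖) := by
      calc ‖(L (φ u₁ - φ u₂, (0 : F))).1‖ ≤ ‖L (φ u₁ - φ u₂, (0 : F))‖ := norm_fst_le _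
        _ ≤ Real.exp (-lam) * m * ‖φ u₁ - φ u₂‖ := hnormE _
        _ ≤ Real.exp (-lam) * m * ((1 / 3) * ‖u₁ - u₂‖) := by
            apply mul_le_mul_of_nonneg_left (hφ u₁ h₁ u₂ h₂) (by positivity)
    have h4 : ‖(h (φ u₁, u₁) - h (φ u₂, u₂)).1‖ ≤ δ * ‖u₁ - u₂‖ :=
      le_trans (norm_fst_le _) (hhd u₁ h₁ u₂ h₂)
    have h5 : ‖(L (φ u₁ - φ u₂, (0 : F))).1 + (h (φ u₁, u₁) - h (φ u₂, u₂)).1‖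
        ≤ ‖(L (φ u₁ - φ u₂, (0 : F))).1‖ + ‖(h (φ u₁, u₁) - h (φ u₂, u₂)).1‖ :=
      norm_add_le _ _
    have h6 := hTd u₁ h₁ u₂ h₂
    nlinarith [norm_nonneg (u₁ - u₂)]
end

section
/- Let f : M → M be a continuous map on a compact metric space and let (φ_n) be a subadditive sequence of continuous functions on M. Define λ(x) = lim_{n→∞} φ_n(x)/n where it exists, and λ(ν) = inf_n (1/n)∫φ_n dν for invariant measures ν. Suppose (ν_k) is a sequence of f-invariant measures, A = {x : λ(x) < χ} for some χ ∈ ℝ, and suppose a limit measure μ of (ν_k) in the weak-* topology satisfies λ(x) ≤ 0 < χ for μ-a.e. x. If moreover each ν_k gives the invariant set A measure at most 1 − ε₀ for some fixed ε₀ > 0, then a contradiction arises; equivalently: if ν_k → μ weakly-* and λ(x) ≤ 0 μ-a.e., then ν_k({x : λ(x) < χ}) → 1 as k → ∞ for every χ > 0. -/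
/-!
Let `B = {χ ≤ λ}`, an invariant set. Conditioning an invariant measure `ν` on `B` gives an
invariant measure on which `λ ≥ χ`, so the infimum formula for `∫ λ` yields
`χ · ν(B) ≤ ∫_B φ_n / n dν ≤ ∫ (φ_n / n)⁺ dν` for every `n`. The right-hand side is the integral
of a continuous function, so along `ν_k → μ` it tends to `∫ (φ_n / n)⁺ dμ`, and this tends to `0`
as `n → ∞` by dominated convergence, since `φ_n / n → λ ≤ 0` `μ`-a.e. and subadditivity bounds
`φ_n / n` above by `‖φ_1‖`. Hence `ν_k(B) → 0`.
-/

open MeasureTheory Filter Topology ProbabilityTheory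
open scoped ENNReal

lemma le_of_pos_le_ciInf {ι : Type*} {g : ι → ℝ} {c : ℝ} (hc : 0 < c) (h : c ≤ ⨅ i, g i)
    (i : ι) : c ≤ g i := by
  -- an infimum over a set unbounded below is the junk value `0 < c`
  have hbdd : BddBelow (Set.range g) := by
    by_contra hb
    rw [Real.iInf_of_not_bddBelow hb] at h
    linarith
  exact h.trans (ciInf_le hbdd i)

lemma le_of_tendsto_div_of_le_mul {u : ℕ → ℝ} {l C : ℝ}
    (hu : Tendsto (fun n : ℕ => u n / n) atTop (𝓝 l)) (hC : ∀ n, 0 < n → u n ≤ n * C) :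
    l ≤ C := by
  refine le_of_tendsto hu ?_
  filter_upwards [eventually_gt_atTop 0] with n hn
  rw [div_le_iff₀ (by exact_mod_cast hn), mul_comm]
  exact hC n hn

lemma tendsto_zero_of_const_mul_le {ι : Type*} {l : Filter ι} {a : ι → ℝ} {b : ℕ → ι → ℝ}
    {c : ℕ → ℝ} {χ : ℝ} (hχ : 0 < χ) (ha : ∀ k, 0 ≤ a k)
    (hab : ∀ᶠ n in atTop, ∀ k, χ * a k ≤ b n k) (hb : ∀ n, Tendsto (b n) l (𝓝 (c n)))
    (hc : Tendsto c atTop (𝓝 0)) : Tendsto a l (𝓝 0) := by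
  refine tendsto_order.2 ⟨fun ε hε => Eventually.of_forall fun k => hε.trans_le (ha k),
    fun ε hε => ?_⟩
  obtain ⟨n, hab_n, hc_n⟩ := (hab.and (hc.eventually_lt_const (mul_pos hχ hε))).exists
  filter_upwards [(hb n).eventually_lt_const hc_n] with k hk
  exact lt_of_mul_lt_mul_left ((hab_n k).trans_lt hk) hχ.le

section

variable {M : Type*} {f : M → M} {φ : ℕ → M → ℝ}

lemma le_mul_of_subadditive
    (hsub : ∀ n m : ℕ, 0 < n → 0 < m → ∀ x, φ (n + m) x ≤ φ n x + φ m (f^[n] x))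
    {C : ℝ} (hC : ∀ x, φ 1 x ≤ C) {n : ℕ} (hn : 0 < n) (x : M) : φ n x ≤ n * C := by
  induction n, Nat.succ_le_of_lt hn using Nat.le_induction generalizing x with
  | base => simpa using hC x
  | succ m hm ih =>
    calc φ (m + 1) x ≤ φ m x + φ 1 (f^[m] x) := hsub m 1 hm one_pos x
      _ ≤ m * C + C := add_le_add (ih hm x) (hC _)
      _ = ↑(m + 1) * C := by push_cast; ring

lemma tendsto_integral_max_div_zero_of_ae_le_zero [MeasurableSpace M] {μ : Measure M}
    [IsFiniteMeasure μ] {lam : M → ℝ} {C : ℝ} (hmeas : ∀ n, AEMeasurable (φ n) μ)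
    (hC : ∀ n, 0 < n → ∀ x, φ n x ≤ n * C)
    (hlim : ∀ᵐ x ∂μ, Tendsto (fun n : ℕ => φ n x / n) atTop (𝓝 (lam x)))
    (hle : ∀ᵐ x ∂μ, lam x ≤ 0) :
    Tendsto (fun n : ℕ => ∫ x, max (φ n x / n) 0 ∂μ) atTop (𝓝 0) := by
  have hdiv_le : ∀ n x, φ n x / n ≤ max C 0 := by
    intro n x
    rcases Nat.eq_zero_or_pos n with rfl | hn
    · simp
    · rw [div_le_iff₀ (by exact_mod_cast hn), mul_comm]
      exact (hC n hn x).trans (by gcongr; exact le_max_left _ _)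
  have h := tendsto_integral_of_dominated_convergence (f := fun _ => 0) (fun _ => max C 0)
    (fun n => (((hmeas n).div_const _).max aemeasurable_const).aestronglyMeasurable)
    (integrable_const _)
    (fun n => Eventually.of_forall fun x => by
      rw [Real.norm_of_nonneg (le_max_right _ _)]
      exact max_le (hdiv_le n x) (le_max_right _ _))
    (by
      filter_upwards [hlim, hle] with x hx hx0
      simpa [max_eq_right hx0] using hx.max (tendsto_const_nhds (x := (0 : ℝ))))
  simpa using h

end

lemma MeasureTheory.MeasurePreserving.cond {α : Type*} [MeasurableSpace α] {μ : Measure α}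
    {f : α → α} (hf : MeasurePreserving f μ μ) {s : Set α} (hs : MeasurableSet s)
    (hfs : f ⁻¹' s = s) : MeasurePreserving f μ[|s] μ[|s] := by
  have h := hf.restrict_preimage hs
  rw [hfs] at h
  exact h.smul_measure _

lemma MeasureTheory.ProbabilityMeasure.map_eq_self_of_tendsto {Ω ι : Type*} [TopologicalSpace Ω]
    [MeasurableSpace Ω] [HasOuterApproxClosed Ω] [BorelSpace Ω] {l : Filter ι} [l.NeBot]
    {f : Ω → Ω} (hf : Continuous f) {ν : ι → ProbabilityMeasure Ω} {μ : ProbabilityMeasure Ω}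
    (hinv : ∀ k, Measure.map f (ν k : Measure Ω) = ν k) (hconv : Tendsto ν l (𝓝 μ)) :
    Measure.map f (μ : Measure Ω) = μ := by
  have hmap := ProbabilityMeasure.tendsto_map_of_tendsto_of_continuous ν μ hconv hf
  have hfix : ∀ k, (ν k).map hf.measurable.aemeasurable = ν k := fun k =>
    Subtype.ext ((ProbabilityMeasure.toMeasure_map _ _).trans (hinv k))
  simp only [hfix] at hmap
  rw [← ProbabilityMeasure.toMeasure_map μ hf.measurable.aemeasurable,
    tendsto_nhds_unique hmap hconv]

lemma MeasureTheory.ProbabilityMeasure.tendsto_measure_compl_one {Ω ι : Type*}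
    [MeasurableSpace Ω] {l : Filter ι} {ν : ι → ProbabilityMeasure Ω} {s : Set Ω}
    (hs : MeasurableSet s) (h : Tendsto (fun k => ((ν k : Measure Ω) s).toReal) l (𝓝 0)) :
    Tendsto (fun k => (ν k : Measure Ω) sᶜ) l (𝓝 1) := by
  rw [← ENNReal.toReal_zero,
    ENNReal.tendsto_toReal_iff (fun k => measure_ne_top _ _) ENNReal.zero_ne_top] at h
  simpa [prob_compl_eq_one_sub hs] using
    ENNReal.Tendsto.sub tendsto_const_nhds h (Or.inl ENNReal.one_ne_top)

section Exponent

variable {M : Type*} [MeasurableSpace M] {f : M → M} {φ : ℕ → M → ℝ} {lam : M → ℝ} {χ C : ℝ}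

lemma le_integral_div_of_ae_le {ν : Measure M} [IsProbabilityMeasure ν] (hχ : 0 < χ)
    (hint : ∫ x, lam x ∂ν = ⨅ n : ℕ+, ((n : ℕ) : ℝ)⁻¹ * ∫ x, φ n x ∂ν)
    (hmeas : AEStronglyMeasurable lam ν) (hge : ∀ᵐ x ∂ν, χ ≤ lam x)
    (hle : ∀ᵐ x ∂ν, lam x ≤ C) {n : ℕ} (hn : 0 < n) : χ ≤ ∫ x, φ n x / n ∂ν := by
  have hlam : Integrable lam ν := by
    refine (integrable_const (max |χ| |C|)).mono' hmeas ?_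
    filter_upwards [hge, hle] with x h₁ h₂ using abs_le_max_abs_abs h₁ h₂
  have hχ_le : χ ≤ ∫ x, lam x ∂ν := by
    simpa using integral_mono_ae (integrable_const χ) hlam hge
  rw [integral_div, div_eq_inv_mul]
  exact le_of_pos_le_ciInf hχ (hχ_le.trans_eq hint) ⟨n, hn⟩

lemma mul_measure_le_integral_max_div (hlam_meas : Measurable lam)
    (hlam_inv : ∀ x, lam (f x) = lam x)
    (hlam_int : ∀ ν : ProbabilityMeasure M,
      Measure.map f (ν : Measure M) = (ν : Measure M) →
      ∫ x, lam x ∂(ν : Measure M) =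
        ⨅ n : ℕ+, (((n : ℕ) : ℝ))⁻¹ * ∫ x, φ (n : ℕ) x ∂(ν : Measure M))
    (hlam_le : ∀ ν : ProbabilityMeasure M,
      Measure.map f (ν : Measure M) = (ν : Measure M) → ∀ᵐ x ∂(ν : Measure M), lam x ≤ C)
    {ν : Measure M} [IsProbabilityMeasure ν] (hν : MeasurePreserving f ν ν)
    {n : ℕ} (hφ : Integrable (φ n) ν) (hχ : 0 < χ) (hn : 0 < n) :
    χ * (ν {x | χ ≤ lam x}).toReal ≤ ∫ x, max (φ n x / n) 0 ∂ν := by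
  set B := {x | χ ≤ lam x}
  have hB : MeasurableSet B := measurableSet_le measurable_const hlam_meas
  rcases eq_or_ne (ν B) 0 with h0 | h0
  · simpa [h0] using integral_nonneg fun x => le_max_right (φ n x / n) 0
  have hνB : 0 < (ν B).toReal := ENNReal.toReal_pos h0 (measure_ne_top _ _)
  have : IsProbabilityMeasure ν[|B] := cond_isProbabilityMeasure h0
  have hcond : MeasurePreserving f ν[|B] ν[|B] := hν.cond hB (by ext x; simp [B, hlam_inv])
  let ν' : ProbabilityMeasure M := ⟨ν[|B], this⟩
  have hχ_le : χ ≤ ∫ x, φ n x / n ∂ν[|B] :=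
    le_integral_div_of_ae_le hχ (hlam_int ν' hcond.map_eq) hlam_meas.aestronglyMeasurable
      (ae_cond_mem hB) (hlam_le ν' hcond.map_eq) hn
  rw [ProbabilityTheory.cond, integral_smul_measure, ENNReal.toReal_inv, smul_eq_mul,
    le_inv_mul_iff₀ hνB, mul_comm] at hχ_le
  calc χ * (ν B).toReal ≤ ∫ x in B, φ n x / n ∂ν := hχ_le
    _ ≤ ∫ x in B, max (φ n x / n) 0 ∂ν :=
      integral_mono (hφ.div_const _).restrict (hφ.div_const _).pos_part.restrict
        fun x => le_max_left _ _
    _ ≤ ∫ x, max (φ n x / n) 0 ∂ν :=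
      setIntegral_le_integral (hφ.div_const _).pos_part
        (Eventually.of_forall fun x => le_max_right _ _)

end Exponent

/-- Let `(φ_n)` be a subadditive sequence of continuous functions on a compact metric space,
with asymptotic exponent `lam x = lim φ_n(x)/n` (existing a.e. for every invariant measure
and invariant). If invariant measures `ν_k` converge weak-* to `μ` and `lam ≤ 0` `μ`-a.e.,
then `ν_k({x : lam x < χ}) → 1` for every `χ > 0`. -/
theorem measure_of_small_exponent_tendsto_one
    {M : Type*} [MetricSpace M] [CompactSpace M] [MeasurableSpace M] [BorelSpace M]
    (f : M → M) (hf : Continuous f)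
    (φ : ℕ → C(M, ℝ))
    (hsub : ∀ n m : ℕ, 0 < n → 0 < m → ∀ x, φ (n + m) x ≤ φ n x + φ m (f^[n] x))
    (lam : M → ℝ) (hlam_meas : Measurable lam)
    (hlam_inv : ∀ x, lam (f x) = lam x)
    (hlam_lim : ∀ ν : ProbabilityMeasure M,
      Measure.map f (ν : Measure M) = (ν : Measure M) →
      ∀ᵐ x ∂(ν : Measure M),
        Tendsto (fun n : ℕ => φ n x / (n : ℝ)) atTop (nhds (lam x)))
    (hlam_int : ∀ ν : ProbabilityMeasure M,
      Measure.map f (ν : Measure M) = (ν : Measure M) →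
      ∫ x, lam x ∂(ν : Measure M) =
        ⨅ n : ℕ+, (((n : ℕ) : ℝ))⁻¹ * ∫ x, φ (n : ℕ) x ∂(ν : Measure M))
    (ν : ℕ → ProbabilityMeasure M) (μ : ProbabilityMeasure M)
    (hinv : ∀ k, Measure.map f (ν k : Measure M) = (ν k : Measure M))
    (hconv : Tendsto ν atTop (nhds μ))
    (hμ : ∀ᵐ x ∂(μ : Measure M), lam x ≤ 0) :
    ∀ χ : ℝ, 0 < χ →
      Tendsto (fun k => (ν k : Measure M) {x | lam x < χ}) atTop (nhds (1 : ℝ≥0∞)) := by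
  intro χ hχ
  have hφ_le : ∀ n, 0 < n → ∀ x, φ n x ≤ n * ‖φ 1‖ := fun n hn =>
    le_mul_of_subadditive (φ := fun n => φ n) hsub
      (fun x => (le_abs_self _).trans ((φ 1).norm_coe_le_norm x)) hn
  have hlam_le : ∀ ν : ProbabilityMeasure M, Measure.map f (ν : Measure M) = (ν : Measure M) →
      ∀ᵐ x ∂(ν : Measure M), lam x ≤ ‖φ 1‖ := fun ν hν => by
    filter_upwards [hlam_lim ν hν] with x hx using
      le_of_tendsto_div_of_le_mul hx fun n hn => hφ_le n hn x
  have hμ_inv := ProbabilityMeasure.map_eq_self_of_tendsto hf hinv hconv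
  set B := {x | χ ≤ lam x}
  have hB : MeasurableSet B := measurableSet_le measurable_const hlam_meas
  let g : ℕ → C(M, ℝ) := fun n => ⟨fun x => max (φ n x / n) 0, by fun_prop⟩
  have hνB : Tendsto (fun k => ((ν k : Measure M) B).toReal) atTop (𝓝 0) :=
    tendsto_zero_of_const_mul_le (b := fun n k => ∫ x, g n x ∂(ν k : Measure M)) hχ
      (fun k => ENNReal.toReal_nonneg)
      ((eventually_gt_atTop 0).mono fun n hn k =>
        mul_measure_le_integral_max_div (φ := fun n => φ n) hlam_meas hlam_inv hlam_int hlam_le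
          ⟨hf.measurable, hinv k⟩ ((BoundedContinuousFunction.mkOfCompact (φ n)).integrable _)
          hχ hn)
      (fun n => ((ProbabilityMeasure.continuous_integral_continuousMap (g n)).tendsto μ).comp
        hconv)
      (tendsto_integral_max_div_zero_of_ae_le_zero (fun n => (φ n).continuous.aemeasurable)
        hφ_le (hlam_lim μ hμ_inv) hμ)
  have hBc : {x | lam x < χ} = Bᶜ := by ext x; simp [B]
  simpa only [hBc] using ProbabilityMeasure.tendsto_measure_compl_one hB hνB
end

section
/- Let (X, f, μ) be an ergodic measure-preserving system and E measurable with μ(E) > 0. Suppose for some ε ∈ (0, 1/4) there is a set K of positive measure such that for all x ∈ K, liminf_{n→∞} m_n(x)/n < 1 − 4ε, where m_n(x) = max{0 ≤ k < n : f^k(x) ∈ E} ∪ {0}. Then there exist N ∈ ℕ and K' ⊆ K with μ(K') > 0 such that for all n > N and x ∈ K', the visit count #{0 ≤ i < n : f^i(x) ∈ E} lies in (n(1−ε)μ(E), n((1−2ε)/(1−3ε))μ(E)), and this leads to a contradiction; hence no such K of positive measure exists. -/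
/-!
For almost every `x`, Birkhoff's ergodic theorem applied to the indicator of `E` gives
`c n / n → μ(E) > 0`, where `c n` counts the visits to `E` before time `n`. All of these visits
happen at or before the last one, `m n`, so `c n ≤ c (m n + 1)`; comparing `c n ≈ μ(E) n` with
`c (m n + 1) ≈ μ(E) (m n + 1)` forces `m n / n → 1`, hence `liminf m n / n = 1 > 1 - 4ε`.

Birkhoff's theorem for a bounded `g` follows from the maximal ergodic theorem (Garsia's proof via
the running maxima of Birkhoff sums): the limsup of the averages is invariant, hence a.e. a
constant `c`, and for `t < c` almost every orbit has a positive Birkhoff sum of `g - t`, so the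
maximal ergodic theorem gives `∫ g ≥ t`. Applied to `-g` this bounds the liminf.
-/

open MeasureTheory Filter
open scoped Classical

/-- `birkhoffMax f g N x = max (0, S₁ x, …, S_N x)` with `Sₙ = birkhoffSum f g n`. -/
noncomputable def birkhoffMax {α : Type*} (f : α → α) (g : α → ℝ) : ℕ → α → ℝ
  | 0 => 0
  | N + 1 => fun x => max 0 (g x + birkhoffMax f g N (f x))

section BirkhoffMax

variable {α : Type*} {f : α → α} {g : α → ℝ}

lemma birkhoffMax_nonneg (N : ℕ) (x : α) : 0 ≤ birkhoffMax f g N x := by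
  cases N with
  | zero => exact le_rfl
  | succ N => exact le_max_left _ _

lemma birkhoffSum_le_birkhoffMax {n N : ℕ} (hn : n ≤ N) (x : α) :
    birkhoffSum f g n x ≤ birkhoffMax f g N x := by
  induction N generalizing n x with
  | zero => simp [Nat.le_zero.mp hn, birkhoffMax]
  | succ N ih =>
    cases n with
    | zero => simpa using birkhoffMax_nonneg (f := f) (g := g) (N + 1) x
    | succ n =>
      rw [birkhoffSum_succ']
      exact le_max_of_le_right (add_le_add le_rfl (ih (Nat.le_of_succ_le_succ hn) (f x)))

lemma exists_birkhoffMax_le_birkhoffSum (N : ℕ) (x : α) :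
    ∃ n ≤ N, birkhoffMax f g N x ≤ birkhoffSum f g n x := by
  induction N generalizing x with
  | zero => exact ⟨0, le_rfl, by simp [birkhoffMax]⟩
  | succ N ih =>
    obtain ⟨n, hn, hle⟩ := ih (f x)
    rcases max_choice 0 (g x + birkhoffMax f g N (f x)) with h | h
    · exact ⟨0, N.zero_le.trans N.le_succ, by simp [birkhoffMax, h]⟩
    · refine ⟨n + 1, Nat.succ_le_succ hn, ?_⟩
      change max _ _ ≤ _
      rw [h, birkhoffSum_succ']
      exact add_le_add le_rfl hle

lemma birkhoffMax_mono (x : α) : Monotone (birkhoffMax f g · x) :=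
  monotone_nat_of_le_succ fun N ↦
    let ⟨_, hn, hle⟩ := exists_birkhoffMax_le_birkhoffSum N x
    hle.trans (birkhoffSum_le_birkhoffMax (hn.trans N.le_succ) x)

lemma birkhoffMax_le_birkhoffSum_abs (N : ℕ) (x : α) :
    birkhoffMax f g N x ≤ birkhoffSum f (|g ·|) N x := by
  induction N generalizing x with
  | zero => simp [birkhoffMax]
  | succ N ih =>
    rw [birkhoffSum_succ']
    refine max_le ?_ (add_le_add (le_abs_self _) (ih (f x)))
    exact add_nonneg (abs_nonneg _) (Finset.sum_nonneg fun _ _ ↦ abs_nonneg _)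

/-- Where it is positive, the running maximum is attained at some `n ≥ 1`. -/
lemma birkhoffMax_le_add_birkhoffMax_comp {N : ℕ} {x : α} (hx : 0 < birkhoffMax f g N x) :
    birkhoffMax f g N x ≤ g x + birkhoffMax f g N (f x) := by
  cases N with
  | zero => exact absurd hx (lt_irrefl 0)
  | succ N =>
    have hpos : birkhoffMax f g (N + 1) x = g x + birkhoffMax f g N (f x) :=
      (max_choice _ _).resolve_left (ne_of_gt hx)
    rw [hpos]
    exact add_le_add le_rfl (birkhoffMax_mono (f x) N.le_succ)

end BirkhoffMax

section MaximalErgodic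

variable {α : Type*} [MeasurableSpace α] {μ : Measure α} {f : α → α} {g : α → ℝ}

lemma measurable_birkhoffSum (hf : Measurable f) (hg : Measurable g) (n : ℕ) :
    Measurable (birkhoffSum f g n) :=
  Finset.measurable_sum _ fun k _ ↦ hg.comp (hf.iterate k)

lemma measurable_birkhoffMax (hf : Measurable f) (hg : Measurable g) (N : ℕ) :
    Measurable (birkhoffMax f g N) := by
  induction N with
  | zero => exact measurable_const
  | succ N ih => exact measurable_const.max (hg.add (ih.comp hf))

lemma integrable_birkhoffSum (hf : MeasurePreserving f μ μ) (hg : Integrable g μ) (n : ℕ) :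
    Integrable (birkhoffSum f g n) μ :=
  integrable_finsetSum _ fun k _ ↦ (hf.iterate k).integrable_comp_of_integrable hg

lemma integrable_birkhoffMax (hf : MeasurePreserving f μ μ) (hgm : Measurable g)
    (hg : Integrable g μ) (N : ℕ) : Integrable (birkhoffMax f g N) μ :=
  (integrable_birkhoffSum hf hg.abs N).mono'
    (measurable_birkhoffMax hf.measurable hgm N).aestronglyMeasurable <|
    Eventually.of_forall fun x ↦ by
      rw [Real.norm_of_nonneg (birkhoffMax_nonneg N x)]
      exact birkhoffMax_le_birkhoffSum_abs N x

lemma setIntegral_birkhoffMax_pos_nonneg (hf : MeasurePreserving f μ μ) (hgm : Measurable g)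
    (hg : Integrable g μ) (N : ℕ) : 0 ≤ ∫ x in {x | 0 < birkhoffMax f g N x}, g x ∂μ := by
  set A := {x | 0 < birkhoffMax f g N x}
  set M := birkhoffMax f g N
  have hA : MeasurableSet A :=
    measurableSet_lt measurable_const (measurable_birkhoffMax hf.measurable hgm N)
  have hM : Integrable M μ := integrable_birkhoffMax hf hgm hg N
  have hMf : Integrable (M ∘ f) μ := hf.integrable_comp_of_integrable hM
  calc 0 = ∫ x, M x ∂μ - ∫ x, M (f x) ∂μ := by
        have hMm : AEStronglyMeasurable M (μ.map f) := by
          rw [hf.map_eq]; exact hM.aestronglyMeasurable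
        rw [← integral_map hf.measurable.aemeasurable hMm, hf.map_eq, sub_self]
    _ ≤ ∫ x in A, M x ∂μ - ∫ x in A, M (f x) ∂μ := by
        rw [setIntegral_eq_integral_of_forall_compl_eq_zero (f := M) (s := A) fun x hx ↦
          le_antisymm (not_lt.mp hx) (birkhoffMax_nonneg N x)]
        exact sub_le_sub_left (setIntegral_le_integral hMf
          (Eventually.of_forall fun x ↦ birkhoffMax_nonneg N (f x))) _
    _ = ∫ x in A, (M x - M (f x)) ∂μ := (integral_sub hM.integrableOn hMf.integrableOn).symm
    _ ≤ ∫ x in A, g x ∂μ := setIntegral_mono_on (hM.sub hMf).integrableOn hg.integrableOn hA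
        fun x hx ↦ by linarith [birkhoffMax_le_add_birkhoffMax_comp hx]

/-- The maximal ergodic theorem. -/
theorem setIntegral_exists_birkhoffSum_pos_nonneg (hf : MeasurePreserving f μ μ)
    (hgm : Measurable g) (hg : Integrable g μ) :
    0 ≤ ∫ x in {x | ∃ n, 0 < birkhoffSum f g n x}, g x ∂μ := by
  have hunion :
      ⋃ N, {x | 0 < birkhoffMax f g N x} = {x | ∃ n, 0 < birkhoffSum f g n x} := by
    ext x
    simp only [Set.mem_iUnion, Set.mem_ofPred_eq]
    constructor
    · rintro ⟨N, hN⟩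
      obtain ⟨n, -, hle⟩ := exists_birkhoffMax_le_birkhoffSum N x
      exact ⟨n, hN.trans_le hle⟩
    · rintro ⟨n, hn⟩
      exact ⟨n, hn.trans_le (birkhoffSum_le_birkhoffMax le_rfl x)⟩
  have hlim := tendsto_setIntegral_of_monotone
    (fun N ↦ measurableSet_lt measurable_const (measurable_birkhoffMax hf.measurable hgm N))
    (fun _ _ hMN x hx ↦ hx.trans_le (birkhoffMax_mono x hMN))
    (by rw [hunion]; exact hg.integrableOn)
  rw [hunion] at hlim
  exact ge_of_tendsto' hlim fun N ↦ setIntegral_birkhoffMax_pos_nonneg hf hgm hg N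

lemma integral_nonneg_of_ae_exists_birkhoffSum_pos (hf : MeasurePreserving f μ μ)
    (hgm : Measurable g) (hg : Integrable g μ)
    (h : ∀ᵐ x ∂μ, ∃ n, 0 < birkhoffSum f g n x) :
    0 ≤ ∫ x, g x ∂μ := by
  have hfull : μ.restrict {x | ∃ n, 0 < birkhoffSum f g n x} = μ :=
    Measure.restrict_eq_self_of_ae_mem h
  simpa only [hfull] using setIntegral_exists_birkhoffSum_pos_nonneg hf hgm hg

end MaximalErgodic

section Limsup

variable {ι : Type*} {l : Filter ι} [l.NeBot] {u v : ι → ℝ}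

lemma limsup_le_limsup_of_tendsto_sub (hv : IsBoundedUnder (· ≤ ·) l v)
    (hv' : IsBoundedUnder (· ≥ ·) l v) (h : Tendsto (u - v) l (nhds 0)) :
    limsup u l ≤ limsup v l :=
  calc limsup u l = limsup (v + (u - v)) l := by rw [add_sub_cancel]
    _ ≤ limsup v l + limsup (u - v) l :=
        limsup_add_le hv' hv h.isBoundedUnder_ge.isCoboundedUnder_le h.isBoundedUnder_le
    _ = limsup v l := by rw [h.limsup_eq, add_zero]

lemma limsup_eq_limsup_of_tendsto_sub (hu : IsBoundedUnder (· ≤ ·) l u)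
    (hu' : IsBoundedUnder (· ≥ ·) l u) (hv : IsBoundedUnder (· ≤ ·) l v)
    (hv' : IsBoundedUnder (· ≥ ·) l v) (h : Tendsto (u - v) l (nhds 0)) :
    limsup u l = limsup v l :=
  le_antisymm (limsup_le_limsup_of_tendsto_sub hv hv' h) <|
    limsup_le_limsup_of_tendsto_sub hu hu' (by simpa [Pi.sub_def] using h.neg)

end Limsup

section BirkhoffAverage

variable {α : Type*} {f : α → α} {g : α → ℝ} {C : ℝ}

lemma abs_birkhoffAverage_le (hC : ∀ x, |g x| ≤ C) (n : ℕ) (x : α) :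
    |birkhoffAverage ℝ f g n x| ≤ C := by
  rcases n.eq_zero_or_pos with rfl | hn
  · simpa using (abs_nonneg _).trans (hC x)
  rw [birkhoffAverage, smul_eq_mul, abs_mul, abs_inv, Nat.abs_cast,
    inv_mul_le_iff₀ (by positivity)]
  calc |birkhoffSum f g n x| ≤ ∑ k ∈ Finset.range n, |g (f^[k] x)| :=
        Finset.abs_sum_le_sum_abs _ _
    _ ≤ n * C := (Finset.sum_le_sum fun k _ ↦ hC (f^[k] x)).trans_eq (by simp)

lemma isBoundedUnder_le_birkhoffAverage (hC : ∀ x, |g x| ≤ C) (l : Filter ℕ) (x : α) :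
    IsBoundedUnder (· ≤ ·) l (birkhoffAverage ℝ f g · x) :=
  isBoundedUnder_of ⟨C, fun n ↦ le_of_abs_le (abs_birkhoffAverage_le hC n x)⟩

lemma isBoundedUnder_ge_birkhoffAverage (hC : ∀ x, |g x| ≤ C) (l : Filter ℕ) (x : α) :
    IsBoundedUnder (· ≥ ·) l (birkhoffAverage ℝ f g · x) :=
  isBoundedUnder_of ⟨-C, fun n ↦ neg_le_of_abs_le (abs_birkhoffAverage_le hC n x)⟩

lemma limsup_birkhoffAverage_apply (hC : ∀ x, |g x| ≤ C) (x : α) :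
    limsup (birkhoffAverage ℝ f g · (f x)) atTop = limsup (birkhoffAverage ℝ f g · x) atTop :=
  limsup_eq_limsup_of_tendsto_sub (isBoundedUnder_le_birkhoffAverage hC _ _)
    (isBoundedUnder_ge_birkhoffAverage hC _ _) (isBoundedUnder_le_birkhoffAverage hC _ _)
    (isBoundedUnder_ge_birkhoffAverage hC _ _) <|
    tendsto_birkhoffAverage_apply_sub_birkhoffAverage' ℝ (isBounded_iff_forall_norm_le.2
      ⟨C, Set.forall_mem_range.2 hC⟩) f x

lemma birkhoffSum_sub_const (t : ℝ) (n : ℕ) (x : α) :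
    birkhoffSum f (fun y ↦ g y - t) n x = birkhoffSum f g n x - n * t := by
  simp [birkhoffSum, Finset.sum_sub_distrib]

lemma exists_birkhoffSum_sub_const_pos {t : ℝ} {x : α} (hC : ∀ x, |g x| ≤ C)
    (ht : t < limsup (birkhoffAverage ℝ f g · x) atTop) :
    ∃ n, 0 < birkhoffSum f (fun y ↦ g y - t) n x := by
  obtain ⟨n, htn, hn⟩ := ((frequently_lt_of_lt_limsup
    (isBoundedUnder_ge_birkhoffAverage hC atTop x).isCoboundedUnder_le ht).and_eventually
    (eventually_gt_atTop 0)).exists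
  refine ⟨n, ?_⟩
  rw [birkhoffAverage, smul_eq_mul, lt_inv_mul_iff₀ (by positivity)] at htn
  rw [birkhoffSum_sub_const]
  linarith

end BirkhoffAverage

section Birkhoff

variable {α : Type*} [MeasurableSpace α] {μ : Measure α} [IsProbabilityMeasure μ]
  {f : α → α} {g : α → ℝ} {C : ℝ}

theorem ae_limsup_birkhoffAverage_le (hf : Ergodic f μ)
    (hg : Measurable g) (hC : ∀ x, |g x| ≤ C) :
    ∀ᵐ x ∂μ, limsup (birkhoffAverage ℝ f g · x) atTop ≤ ∫ x, g x ∂μ := by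
  set β : α → ℝ := fun x ↦ limsup (birkhoffAverage ℝ f g · x) atTop
  have hβ : Measurable β := Measurable.limsup fun n ↦
    (measurable_birkhoffSum hf.measurable hg n).const_smul ((n : ℝ)⁻¹)
  obtain ⟨c, hc⟩ := hf.ae_eq_const_of_ae_eq_comp₀ hβ.nullMeasurable
    (Eventually.of_forall fun x ↦ limsup_birkhoffAverage_apply hC x)
  suffices c ≤ ∫ x, g x ∂μ by
    filter_upwards [hc] with x hx
    exact hx.trans_le this
  refine le_of_forall_lt_imp_le_of_dense fun t ht ↦ ?_
  have hgi : Integrable g μ :=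
    .of_bound hg.aestronglyMeasurable C (Eventually.of_forall hC)
  have hpos := integral_nonneg_of_ae_exists_birkhoffSum_pos (g := fun y ↦ g y - t)
    hf.toMeasurePreserving (hg.sub measurable_const) (hgi.sub (integrable_const t)) <| by
      filter_upwards [hc] with x hx
      exact exists_birkhoffSum_sub_const_pos hC (ht.trans_eq hx.symm)
  rw [integral_sub hgi (integrable_const t), integral_const, probReal_univ, one_smul] at hpos
  linarith

/-- **Birkhoff's pointwise ergodic theorem**. -/
theorem ae_tendsto_birkhoffAverage (hf : Ergodic f μ)
    (hg : Measurable g) (hC : ∀ x, |g x| ≤ C) :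
    ∀ᵐ x ∂μ, Tendsto (birkhoffAverage ℝ f g · x) atTop (nhds (∫ x, g x ∂μ)) := by
  have hC' : ∀ x, |(-g) x| ≤ C := by simpa using hC
  filter_upwards [ae_limsup_birkhoffAverage_le hf hg hC,
    ae_limsup_birkhoffAverage_le hf hg.neg hC'] with x hup hdown
  have hneg := Antitone.map_limsup_of_continuousAt (F := atTop) (fun _ _ ↦ neg_le_neg)
    (birkhoffAverage ℝ f (-g) · x) continuous_neg.continuousAt
    (isBoundedUnder_le_birkhoffAverage hC' _ x)
    (isBoundedUnder_ge_birkhoffAverage hC' _ x).isCoboundedUnder_le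
  simp only [birkhoffAverage_neg, Pi.neg_apply, Function.comp_def, neg_neg] at hneg hdown
  rw [integral_neg] at hdown
  refine tendsto_of_le_liminf_of_limsup_le ?_ hup (isBoundedUnder_le_birkhoffAverage hC _ x)
    (isBoundedUnder_ge_birkhoffAverage hC _ x)
  linarith

end Birkhoff

theorem tendsto_div_one_of_le_comp_succ {a : ℝ} (ha : 0 < a) {c m : ℕ → ℕ}
    (hc : ∀ n, c n ≤ n) (hm : ∀ n, m n ≤ n) (hcm : ∀ n, c n ≤ c (m n + 1))
    (h : Tendsto (fun n ↦ (c n : ℝ) / n) atTop (nhds a)) :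
    Tendsto (fun n ↦ (m n : ℝ) / n) atTop (nhds 1) := by
  have hc_top : Tendsto (fun n ↦ (c n : ℝ)) atTop atTop := by
    refine (tendsto_natCast_atTop_atTop.atTop_mul_pos ha h).congr' ?_
    filter_upwards [eventually_gt_atTop 0] with n hn
    field_simp
  have hm_top : Tendsto (fun n ↦ m n + 1) atTop atTop :=
    tendsto_natCast_atTop_iff.1 <| tendsto_atTop_mono (fun n ↦ by
      exact_mod_cast (hcm n).trans (hc _)) hc_top
  set q : ℕ → ℝ := fun n ↦ (c (m n + 1) : ℝ) / (m n + 1 : ℕ)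
  have hq : Tendsto q atTop (nhds a) := h.comp hm_top
  have hlower : Tendsto (fun n : ℕ ↦ (c n : ℝ) / n / q n - 1 / n) atTop (nhds 1) := by
    simpa [ha.ne'] using (h.div hq ha.ne').sub tendsto_one_div_atTop_nhds_zero_nat
  refine tendsto_of_tendsto_of_tendsto_of_le_of_le' hlower tendsto_const_nhds ?_ ?_
  · filter_upwards [eventually_gt_atTop 0, hq.eventually (lt_mem_nhds ha)] with n hn hqn
    have hn' : (0 : ℝ) < n := by exact_mod_cast hn
    have hcq : (c n : ℝ) ≤ q n * (m n + 1) := by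
      simp only [q, Nat.cast_succ]
      rw [div_mul_cancel₀ _ (by positivity)]
      exact_mod_cast hcm n
    have : (c n : ℝ) / n / q n ≤ (m n + 1) / n := by
      rw [div_div, div_le_div_iff₀ (by positivity) hn']
      nlinarith
    rw [add_div] at this
    linarith
  · filter_upwards [eventually_gt_atTop 0] with n hn
    rw [div_le_one (by positivity)]
    exact_mod_cast hm n

section LastVisit

open Finset

variable {p : ℕ → Prop} [DecidablePred p]

lemma card_filter_range_le_card_filter_range_sup_succ (n : ℕ) :
    #{k ∈ range n | p k} ≤ #{k ∈ range ({k ∈ range n | p k}.sup id + 1) | p k} :=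
  card_le_card fun _ hk ↦ mem_filter.2
    ⟨mem_range.2 (Nat.lt_succ_of_le (le_sup (f := id) hk)), (mem_filter.1 hk).2⟩

lemma sup_filter_range_le (n : ℕ) : {k ∈ range n | p k}.sup id ≤ n :=
  Finset.sup_le fun _ hk ↦ (mem_range.1 (mem_filter.1 hk).1).le

theorem tendsto_sup_filter_range_div_of_tendsto_card_div {a : ℝ} (ha : 0 < a)
    (h : Tendsto (fun n : ℕ ↦ (#{k ∈ range n | p k} : ℝ) / n) atTop (nhds a)) :
    Tendsto (fun n : ℕ ↦ (({k ∈ range n | p k}.sup id : ℕ) : ℝ) / n) atTop (nhds 1) :=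
  tendsto_div_one_of_le_comp_succ ha (fun n ↦ (card_filter_le _ _).trans (card_range n).le)
    sup_filter_range_le card_filter_range_le_card_filter_range_sup_succ h

end LastVisit

section Visits

open Finset

variable {α : Type*} {f : α → α} {E : Set α}

lemma birkhoffAverage_indicator_one (n : ℕ) (x : α) :
    birkhoffAverage ℝ f (E.indicator 1) n x = (#{k ∈ range n | f^[k] x ∈ E} : ℝ) / n := by
  simp [birkhoffAverage, birkhoffSum, Set.indicator_apply, sum_boole, div_eq_inv_mul]

theorem ae_tendsto_card_visits_div [MeasurableSpace α] {μ : Measure α} [IsProbabilityMeasure μ]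
    (hf : Ergodic f μ) (hE : MeasurableSet E) :
    ∀ᵐ x ∂μ, Tendsto (fun n : ℕ ↦ (#{k ∈ range n | f^[k] x ∈ E} : ℝ) / n) atTop
      (nhds (μ.real E)) := by
  have hC : ∀ x, |E.indicator (1 : α → ℝ) x| ≤ 1 := fun x ↦ by
    by_cases hx : x ∈ E <;> simp [hx]
  filter_upwards [ae_tendsto_birkhoffAverage (g := E.indicator 1) hf
    (measurable_const.indicator hE) hC] with x hx
  rw [integral_indicator_one hE] at hx
  simpa only [birkhoffAverage_indicator_one] using hx

end Visits

theorem no_positive_measure_set_of_small_visit_liminf_general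
    {X : Type*} [MeasurableSpace X] {μ : Measure X} [IsProbabilityMeasure μ]
    {f : X → X} (hf : Ergodic f μ) {E : Set X} (hE : MeasurableSet E) (hμE : 0 < μ E)
    (ε : ℝ) (hε : 0 < ε)
    (K : Set X)
    (hliminf : ∀ x ∈ K,
      Filter.liminf
        (fun n : ℕ =>
          ((((Finset.range n).filter (fun k => f^[k] x ∈ E)).sup id : ℕ) : ℝ) / (n : ℝ))
        atTop < 1 - 4 * ε) :
    μ K = 0 := by
  have hμE' : 0 < μ.real E := ENNReal.toReal_pos hμE.ne' (measure_ne_top μ E)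
  refine measure_eq_zero_iff_ae_notMem.2 ?_
  filter_upwards [ae_tendsto_card_visits_div hf hE] with x hx hxK
  have hlast := (tendsto_sup_filter_range_div_of_tendsto_card_div hμE' hx).liminf_eq
  linarith [hliminf x hxK]

/-- In an ergodic system with `μ(E) > 0`, the set of points `x` where
`liminf m_n(x)/n < 1 - 4ε` (with `m_n(x) = max{0 ≤ k < n : f^k x ∈ E} ∪ {0}` the last visit
time) must have measure zero: no such set of positive measure exists. -/
theorem no_positive_measure_set_of_small_visit_liminf
    {X : Type*} [MeasurableSpace X] {μ : Measure X} [IsProbabilityMeasure μ]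
    {f : X → X} (hf : Ergodic f μ) {E : Set X} (hE : MeasurableSet E) (hμE : 0 < μ E)
    (ε : ℝ) (hε : 0 < ε) (hε' : ε < 1 / 4)
    (K : Set X) (hK : MeasurableSet K)
    (hliminf : ∀ x ∈ K,
      Filter.liminf
        (fun n : ℕ =>
          ((((Finset.range n).filter (fun k => f^[k] x ∈ E)).sup id : ℕ) : ℝ) / (n : ℝ))
        atTop < 1 - 4 * ε) :
    μ K = 0 :=
  no_positive_measure_set_of_small_visit_liminf_general hf hE hμE ε hε K hliminf
end

section
/- Let μ be a probability measure on a compact metric space, 𝒫 a finite partition, and suppose a measurable set W satisfies: whenever more than one element of 𝒫 meets W, then a fixed point z ∈ W lies in the η-neighborhood B(∂𝒫, η) of the boundary of 𝒫 (where diam(W) ≤ η/4). More precisely: if diam(W) ≤ η/4, z ∈ W, and #{P ∈ 𝒫 : P ∩ W ≠ ∅} > 1, then z ∈ B(∂𝒫, η). Consequently, for a map f and n ≥ 1, #{P_n ∈ 𝒫^n : P_n ∩ W ≠ ∅} ≤ (#𝒫)^{#{0 ≤ i < n : f^i(z) ∈ B(∂𝒫, η)}}, provided diam(f^i(W)) ≤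 η/4 for all 0 ≤ i < n. -/
open MeasureTheory

/-- Counting elements of the iterated join meeting a set `W` of small iterated diameters.
If whenever a set of diameter `≤ η/4` containing a given point meets more than one element
of the partition `P`, that point is `η`-close to the boundary `∂P = ⋃ᵢ ∂(P i)`, then the
number of atoms of `P^n` meeting `W` is at most
`(#P)^{#{0 ≤ i < n : f^i z ∈ B(∂P, η)}}`, provided `diam(f^i(W)) ≤ η/4` for `0 ≤ i < n`. -/
theorem card_join_atoms_meeting_le
    {X : Type*} [MetricSpace X] {ι : Type*} [Fintype ι]
    (P : ι → Set X)
    (hdisj : Pairwise (Function.onFun Disjoint P))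
    (hcover : ⋃ i, P i = Set.univ)
    (f : X → X) (η : ℝ) (hη : 0 < η) (W : Set X) (z : X) (hz : z ∈ W) (n : ℕ)
    (hyp : ∀ (W' : Set X) (z' : X), z' ∈ W' → Metric.diam W' ≤ η / 4 →
      1 < Nat.card {i : ι | (P i ∩ W').Nonempty} →
      z' ∈ Metric.thickening η (⋃ i, frontier (P i)))
    (hdiam : ∀ i < n, Metric.diam (f^[i] '' W) ≤ η / 4) :
    Nat.card {a : Fin n → ι | ((⋂ j : Fin n, f^[(j : ℕ)] ⁻¹' P (a j)) ∩ W).Nonempty} ≤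
      (Fintype.card ι) ^
        (Nat.card {i : Fin n |
          f^[(i : ℕ)] z ∈ Metric.thickening η (⋃ i, frontier (P i))}) := by
  classical
  set T : Set X := Metric.thickening η (⋃ i, frontier (P i)) with hT
  set S : Set (Fin n) := {i : Fin n | f^[(i : ℕ)] z ∈ T} with hS
  set A : Set (Fin n → ι) :=
    {a : Fin n → ι | ((⋂ j : Fin n, f^[(j : ℕ)] ⁻¹' P (a j)) ∩ W).Nonempty} with hA
  have key : ∀ (j : Fin n), j ∉ S → ∀ i i' : ι,
      (P i ∩ (f^[(j : ℕ)] '' W)).Nonempty → (P i' ∩ (f^[(j : ℕ)] '' W)).Nonempty → i = i' := by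
    intro j hj i i' hi hi'
    by_contra hne
    apply hj
    apply hyp (f^[(j : ℕ)] '' W) (f^[(j : ℕ)] z) ⟨z, hz, rfl⟩ (hdiam j j.isLt)
    rw [Nat.card_eq_fintype_card, Fintype.one_lt_card_iff_nontrivial]
    exact ⟨⟨i, hi⟩, ⟨i', hi'⟩, fun h => hne (congrArg Subtype.val h)⟩
  have hinj : Function.Injective (fun (a : A) (j : S) => a.1 j.1) := by
    intro a b h
    apply Subtype.ext
    funext j
    by_cases hjS : j ∈ S
    · exact congrFun h ⟨j, hjS⟩
    · obtain ⟨x, hx1, hx2⟩ := a.2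
      obtain ⟨y, hy1, hy2⟩ := b.2
      exact key j hjS _ _ ⟨f^[(j : ℕ)] x, Set.mem_iInter.mp hx1 j, ⟨x, hx2, rfl⟩⟩
        ⟨f^[(j : ℕ)] y, Set.mem_iInter.mp hy1 j, ⟨y, hy2, rfl⟩⟩
  calc Nat.card A ≤ Nat.card (S → ι) := Nat.card_le_card_of_injective _ hinj
    _ = Fintype.card ι ^ Nat.card S := by
        rw [Nat.card_fun, Nat.card_eq_fintype_card]
end

section
/- Let E, F be finite-dimensional inner product spaces, and let A : E ⊕ F → E ⊕ F be an invertible linear map and h a Lipschitz map with Lip(h) ≤ η. Let π^E, π^F be projections with norms ≤ C_ang, and suppose m(π^F ∘ A|_F) ≥ 1 − η, ‖π^F ∘ A|_E‖ ≤ η, ‖π^E ∘ A|_E‖ ≤ 1 + η, ‖π^E ∘ A|_F‖ ≤ η, with 0 < η < 1/(100·C_ang). Let ψ : F(2δ) → E be C¹ with ψ(0) = 0 and Lip(ψ) ≤ 1/4, and set G = A + h. Define D = {G(v + ψ(v)) : v ∈ F(2δ)}. Then π^F restricted to D is injective, satisfies ‖π^F(u₁ − u₂)‖ ≥ (4/5)‖v₁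 − v₂‖ for the corresponding parameters v_i, and the induced map ψ' = π^E ∘ (π^F|_D)^{-1}, wherever defined, is Lipschitz with Lip(ψ') ≤ (1 + 15C_angη)/(4(1 − 4C_angη)) ≤ 1/3. -/
open Metric

set_option maxHeartbeats 1600000 in
/-- Graphs transported by a chart change `G = A + h` stay Lipschitz graphs. Under the
stated bounds on the invertible linear map `A`, the `η`-Lipschitz perturbation `h`, and the
angles (`C_ang`), for a `C¹` map `ψ : F(2δ) → E` with `ψ(0) = 0` and `Lip(ψ) ≤ 1/4`, the
projection `π^F` is expanding (hence injective) on `D = G(graph ψ)`, and the induced map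
`ψ' = π^E ∘ (π^F|_D)⁻¹` is Lipschitz with constant
`(1 + 15 C_ang η)/(4(1 − 4 C_ang η)) ≤ 1/3`. -/
theorem chart_change_graph_lipschitz
    {E F : Type*} [NormedAddCommGroup E] [InnerProductSpace ℝ E] [FiniteDimensional ℝ E]
    [NormedAddCommGroup F] [InnerProductSpace ℝ F] [FiniteDimensional ℝ F]
    (A : (E × F) ≃ₗ[ℝ] (E × F)) (h : E × F → E × F) (η C_ang δ : ℝ)
    (hC : 1 ≤ C_ang) (hη : 0 < η) (hη' : η < 1 / (100 * C_ang)) (hδ : 0 < δ)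
    (hLip : ∀ p q : E × F, ‖h p - h q‖ ≤ η * ‖p - q‖)
    (hmF : ∀ v : F, (1 - η) * ‖v‖ ≤ ‖(A (0, v)).2‖)
    (hFE : ∀ e : E, ‖(A (e, 0)).2‖ ≤ η * ‖e‖)
    (hEE : ∀ e : E, ‖(A (e, 0)).1‖ ≤ (1 + η) * ‖e‖)
    (hEF : ∀ v : F, ‖(A (0, v)).1‖ ≤ η * ‖v‖)
    (ψ : F → E) (hψ0 : ψ 0 = 0)
    (hψC1 : ContDiffOn ℝ 1 ψ (ball (0 : F) (2 * δ)))
    (hψLip : ∀ v₁ ∈ ball (0 : F) (2 * δ), ∀ v₂ ∈ ball (0 : F) (2 * δ),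
      ‖ψ v₁ - ψ v₂‖ ≤ (1 / 4) * ‖v₁ - v₂‖)
    (G : E × F → E × F) (hG : ∀ p, G p = A p + h p)
    (D : Set (E × F)) (hD : D = (fun v : F => G (ψ v, v)) '' ball (0 : F) (2 * δ)) :
    (∀ v₁ ∈ ball (0 : F) (2 * δ), ∀ v₂ ∈ ball (0 : F) (2 * δ),
        (4 / 5) * ‖v₁ - v₂‖ ≤ ‖(G (ψ v₁, v₁)).2 - (G (ψ v₂, v₂)).2‖) ∧
      Set.InjOn Prod.snd D ∧
      ((1 + 15 * C_ang * η) / (4 * (1 - 4 * C_ang * η)) ≤ 1 / 3 ∧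
        ∀ u₁ ∈ D, ∀ u₂ ∈ D,
          ‖u₁.1 - u₂.1‖ ≤
            ((1 + 15 * C_ang * η) / (4 * (1 - 4 * C_ang * η))) * ‖u₁.2 - u₂.2‖) := by
  have hC0 : (0 : ℝ) < C_ang := lt_of_lt_of_le one_pos hC
  have ht : C_ang * η < 1 / 100 := by
    rw [lt_div_iff₀ (by positivity : (0:ℝ) < 100 * C_ang)] at hη'
    nlinarith
  have htη : η ≤ C_ang * η := by nlinarith
  have hη100 : η < 1 / 100 := lt_of_le_of_lt htη ht
  -- main estimates
  have key : ∀ v₁ ∈ ball (0 : F) (2 * δ), ∀ v₂ ∈ ball (0 : F) (2 * δ),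
      (1 - 9 * η / 4) * ‖v₁ - v₂‖ ≤ ‖(G (ψ v₁, v₁)).2 - (G (ψ v₂, v₂)).2‖ ∧
      ‖(G (ψ v₁, v₁)).1 - (G (ψ v₂, v₂)).1‖ ≤ ((1 + η) / 4 + 2 * η) * ‖v₁ - v₂‖ := by
    intro v₁ hv₁ v₂ hv₂
    set p₁ : E × F := (ψ v₁, v₁)
    set p₂ : E × F := (ψ v₂, v₂)
    have hψb := hψLip v₁ hv₁ v₂ hv₂
    have hn0 : (0 : ℝ) ≤ ‖v₁ - v₂‖ := norm_nonneg _
    have hp : ‖p₁ - p₂‖ ≤ ‖v₁ - v₂‖ := by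
      have : p₁ - p₂ = (ψ v₁ - ψ v₂, v₁ - v₂) := rfl
      rw [this, Prod.norm_def]
      exact max_le (by nlinarith) le_rfl
    have hh : ‖h p₁ - h p₂‖ ≤ η * ‖v₁ - v₂‖ :=
      (hLip p₁ p₂).trans (by nlinarith)
    have hh1 : ‖(h p₁).1 - (h p₂).1‖ ≤ η * ‖v₁ - v₂‖ := by
      have := norm_fst_le (h p₁ - h p₂); simpa using this.trans hh
    have hh2 : ‖(h p₁).2 - (h p₂).2‖ ≤ η * ‖v₁ - v₂‖ := by
      have := norm_snd_le (h p₁ - h p₂); simpa using this.trans hh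
    have hA : A p₁ - A p₂ = A (ψ v₁ - ψ v₂, 0) + A (0, v₁ - v₂) := by
      rw [← map_sub, ← map_add]
      congr 1
      simp [p₁, p₂, Prod.ext_iff]
    have hGsub : G p₁ - G p₂ =
        A (ψ v₁ - ψ v₂, 0) + A (0, v₁ - v₂) + (h p₁ - h p₂) := by
      rw [hG, hG, ← hA]; abel
    have hG1 : (G p₁).1 - (G p₂).1 =
        (A (ψ v₁ - ψ v₂, 0)).1 + (A (0, v₁ - v₂)).1 + ((h p₁).1 - (h p₂).1) := by
      have := congrArg Prod.fst hGsub; simpa using this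
    have hG2 : (G p₁).2 - (G p₂).2 =
        (A (ψ v₁ - ψ v₂, 0)).2 + (A (0, v₁ - v₂)).2 + ((h p₁).2 - (h p₂).2) := by
      have := congrArg Prod.snd hGsub; simpa using this
    have ha2 : ‖(A (ψ v₁ - ψ v₂, 0)).2‖ ≤ η * ((1/4) * ‖v₁ - v₂‖) :=
      (hFE _).trans (by nlinarith)
    have ha1 : ‖(A (ψ v₁ - ψ v₂, 0)).1‖ ≤ (1 + η) * ((1/4) * ‖v₁ - v₂‖) :=
      (hEE _).trans (by nlinarith)
    constructor
    · have hb : (A (0, v₁ - v₂)).2 =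
          ((G p₁).2 - (G p₂).2) - (A (ψ v₁ - ψ v₂, 0)).2 - ((h p₁).2 - (h p₂).2) := by
        rw [hG2]; abel
      have hbn : ‖(A (0, v₁ - v₂)).2‖ ≤
          ‖(G p₁).2 - (G p₂).2‖ + ‖(A (ψ v₁ - ψ v₂, 0)).2‖ + ‖(h p₁).2 - (h p₂).2‖ := by
        rw [hb]
        exact (norm_sub_le _ _).trans (by gcongr; exact norm_sub_le _ _)
      have := hmF (v₁ - v₂)
      nlinarith
    · calc ‖(G p₁).1 - (G p₂).1‖
          ≤ ‖(A (ψ v₁ - ψ v₂, 0)).1‖ + ‖(A (0, v₁ - v₂)).1‖ + ‖(h p₁).1 - (h p₂).1‖ := by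
            rw [hG1]
            exact (norm_add_le _ _).trans (by gcongr; exact norm_add_le _ _)
        _ ≤ ((1 + η) / 4 + 2 * η) * ‖v₁ - v₂‖ := by
            have := hEF (v₁ - v₂)
            nlinarith
  refine ⟨?_, ?_, ?_, ?_⟩
  · intro v₁ hv₁ v₂ hv₂
    have := (key v₁ hv₁ v₂ hv₂).1
    have hn0 : (0 : ℝ) ≤ ‖v₁ - v₂‖ := norm_nonneg _
    nlinarith
  · rintro u₁ hu₁ u₂ hu₂ heq
    rw [hD] at hu₁ hu₂
    obtain ⟨v₁, hv₁, rfl⟩ := hu₁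
    obtain ⟨v₂, hv₂, rfl⟩ := hu₂
    have hlow := (key v₁ hv₁ v₂ hv₂).1
    have : ‖(G (ψ v₁, v₁)).2 - (G (ψ v₂, v₂)).2‖ = 0 := by
      simp only [Function.comp] at heq
      rw [show (G (ψ v₁, v₁)).2 = (G (ψ v₂, v₂)).2 from heq]
      simp
    have hv : v₁ = v₂ := by
      have hne : ‖v₁ - v₂‖ = 0 :=
        le_antisymm (by nlinarith) (norm_nonneg _)
      exact sub_eq_zero.mp (norm_eq_zero.mp hne)
    rw [hv]
  · rw [div_le_iff₀ (by nlinarith : (0:ℝ) < 4 * (1 - 4 * C_ang * η))]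
    nlinarith
  · intro u₁ hu₁ u₂ hu₂
    rw [hD] at hu₁ hu₂
    obtain ⟨v₁, hv₁, rfl⟩ := hu₁
    obtain ⟨v₂, hv₂, rfl⟩ := hu₂
    obtain ⟨hlow, hup⟩ := key v₁ hv₁ v₂ hv₂
    have hn0 : (0 : ℝ) ≤ ‖v₁ - v₂‖ := norm_nonneg _
    have hden : (0:ℝ) < 4 * (1 - 4 * C_ang * η) := by nlinarith
    set K : ℝ := (1 + 15 * C_ang * η) / (4 * (1 - 4 * C_ang * η)) with hK
    have hK0 : 0 ≤ K := by positivity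
    have hmid : (1 + η) / 4 + 2 * η ≤ K * (1 - 9 * η / 4) := by
      rw [hK, div_mul_eq_mul_div, le_div_iff₀ hden]
      nlinarith
    calc ‖(G (ψ v₁, v₁)).1 - (G (ψ v₂, v₂)).1‖
        ≤ ((1 + η) / 4 + 2 * η) * ‖v₁ - v₂‖ := hup
      _ ≤ K * ((1 - 9 * η / 4) * ‖v₁ - v₂‖) := by
          rw [← mul_assoc]
          exact mul_le_mul_of_nonneg_right hmid hn0
      _ ≤ K * ‖(G (ψ v₁, v₁)).2 - (G (ψ v₂, v₂)).2‖ := by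
          exact mul_le_mul_of_nonneg_left hlow hK0
end
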